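/- arXiv:2305.15246 — 5 statements merged into one kernel-verified Lean document; each statement's English description precedes it below -/
import Mathlib

section
/- Let f, f_n : ℝ⁴ → ℝ∪{+∞} be lower semicontinuous functions. Assume: (i) for every convergent sequence x_n → x in ℝ⁴ one has liminf_{n→∞} f_n(x_n) ≥ f(x); and (ii) for every x ∈ ℝ⁴ there exists a sequence x_n → x with limsup_{n→∞} f_n(x_n) ≤ f(x). Then the epigraphs converge: the Hausdorff distance between E(𝔢f_n) and E(𝔢f) tends to 0 as n → ∞. -/
open Filter
open Topology

noncomputable section

/-- `ℝ⁴` as Euclidean space. -/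
abbrev R4 := EuclideanSpace ℝ (Fin 4)

/-- For `r = (u,v) ∈ ℝ² × ℝ²`, the Euclidean norm `|u - v|` of `u - v` in `ℝ²`. -/
def uvDist (r : R4) : ℝ := Real.sqrt ((r 0 - r 2) ^ 2 + (r 1 - r 3) ^ 2)

/-- The compactification map `s ↦ s/(1+|s|)` on `ℝ̄ = ℝ ∪ {±∞}`. -/
def squash (s : EReal) : ℝ :=
  if s = ⊤ then 1 else if s = ⊥ then -1 else s.toReal / (1 + |s.toReal|)

/-- The map `E : ℝ⁴ × ℝ̄ → ℝ⁴ × [-1,1]`,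
`E(r,s) = (r, |u-v| e^{-|r|} s/(1+|s|))` with `E(r, ±∞) = (r, ±|u-v| e^{-|r|})`. -/
def Emap (p : R4 × EReal) : R4 × ℝ :=
  (p.1, uvDist p.1 * Real.exp (-‖p.1‖) * squash p.2)

/-- The epigraph of a function `f : ℝ⁴ → ℝ̄`. -/
def epigraph (f : R4 → EReal) : Set (R4 × EReal) := {p | f p.1 ≤ p.2}

/-! ### Auxiliary -/

def wgt (r : R4) : ℝ := uvDist r * Real.exp (-‖r‖)

lemma Emap_def (p : R4 × EReal) : Emap p = (p.1, wgt p.1 * squash p.2) := rfl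

lemma g_le_g {t u : ℝ} (h : t ≤ u) : t / (1 + |t|) ≤ u / (1 + |u|) := by
  have ht : 0 < 1 + |t| := by positivity
  have hu : 0 < 1 + |u| := by positivity
  rw [div_le_div_iff₀ ht hu]
  rcases abs_cases t with ⟨h1, h1'⟩ | ⟨h1, h1'⟩ <;> rcases abs_cases u with ⟨h2, h2'⟩ | ⟨h2, h2'⟩ <;>
    nlinarith

lemma g_lt_g {t u : ℝ} (h : t < u) : t / (1 + |t|) < u / (1 + |u|) := by
  have ht : 0 < 1 + |t| := by positivity
  have hu : 0 < 1 + |u| := by positivity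
  rw [div_lt_div_iff₀ ht hu]
  rcases abs_cases t with ⟨h1, h1'⟩ | ⟨h1, h1'⟩ <;> rcases abs_cases u with ⟨h2, h2'⟩ | ⟨h2, h2'⟩ <;>
    nlinarith

lemma abs_g_le_one (t : ℝ) : |t / (1 + |t|)| ≤ 1 := by
  rw [abs_div, abs_of_pos (by positivity : (0:ℝ) < 1 + |t|), div_le_one (by positivity)]
  linarith [abs_nonneg t]

lemma squash_top : squash ⊤ = 1 := by simp [squash]
lemma squash_bot : squash ⊥ = -1 := by simp [squash]
lemma squash_coe (x : ℝ) : squash (x : EReal) = x / (1 + |x|) := by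
  simp [squash, EReal.coe_ne_top, EReal.coe_ne_bot]

lemma neg_one_le_squash (s : EReal) : -1 ≤ squash s := by
  induction s using EReal.rec with
  | bot => simp [squash_bot]
  | top => simp [squash_top]
  | coe x =>
    rw [squash_coe]
    have := abs_g_le_one x
    rw [abs_le] at this; exact this.1

lemma squash_le_one (s : EReal) : squash s ≤ 1 := by
  induction s using EReal.rec with
  | bot => simp [squash_bot]
  | top => simp [squash_top]
  | coe x =>
    rw [squash_coe]
    have := abs_g_le_one x
    rw [abs_le] at this; exact this.2

lemma squash_mono : Monotone squash := by
  intro a b hab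
  induction a using EReal.rec with
  | bot => rw [squash_bot]; exact neg_one_le_squash b
  | top => rw [top_le_iff.1 hab]
  | coe x =>
    induction b using EReal.rec with
    | bot => exact absurd (le_bot_iff.1 hab) (EReal.coe_ne_bot x)
    | top => rw [squash_top]; exact squash_le_one _
    | coe y => rw [squash_coe, squash_coe]; exact g_le_g (EReal.coe_le_coe_iff.1 hab)

lemma squash_strictMono : StrictMono squash := by
  intro a b hab
  induction b using EReal.rec with
  | bot => exact absurd hab (not_lt_bot)
  | top =>
    rw [squash_top]
    induction a using EReal.rec with
    | bot => rw [squash_bot]; norm_num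
    | top => exact absurd hab (lt_irrefl _)
    | coe x =>
      rw [squash_coe]
      have := abs_g_le_one x
      rw [abs_le] at this
      rcases lt_or_eq_of_le this.2 with h | h
      · exact h
      · exfalso
        have hx : 0 < 1 + |x| := by positivity
        rw [div_eq_one_iff_eq (ne_of_gt hx)] at h
        rcases abs_cases x with ⟨h1, h1'⟩ | ⟨h1, h1'⟩ <;> linarith
  | coe y =>
    induction a using EReal.rec with
    | bot =>
      rw [squash_bot, squash_coe]
      have := abs_g_le_one y
      rw [abs_le] at this
      rcases lt_or_eq_of_le this.1 with h | h
      · exact h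
      · exfalso
        have hy : 0 < 1 + |y| := by positivity
        have : y = -(1 + |y|) := by
          field_simp at h
          linarith [h]
        rcases abs_cases y with ⟨h1, h1'⟩ | ⟨h1, h1'⟩ <;> linarith
    | top => exact absurd hab (not_top_lt)
    | coe x => rw [squash_coe, squash_coe]; exact g_lt_g (EReal.coe_lt_coe_iff.1 hab)

def unsquash (σ : ℝ) : EReal :=
  if 1 ≤ σ then ⊤ else if σ ≤ -1 then ⊥ else ((σ / (1 - |σ|) : ℝ) : EReal)

lemma squash_unsquash {σ : ℝ} (h1 : -1 ≤ σ) (h2 : σ ≤ 1) : squash (unsquash σ) = σ := by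
  unfold unsquash
  rcases le_or_gt 1 σ with h | h
  · rw [if_pos h, squash_top]; linarith
  · rw [if_neg (not_le.2 h)]
    rcases le_or_gt σ (-1) with h' | h'
    · rw [if_pos h', squash_bot]; linarith
    · rw [if_neg (not_le.2 h'), squash_coe]
      have habs : |σ| < 1 := abs_lt.2 ⟨h', h⟩
      have hd : (0:ℝ) < 1 - |σ| := by linarith
      rw [abs_div, abs_of_pos hd]
      field_simp
      ring

lemma wgt_nonneg (r : R4) : 0 ≤ wgt r := mul_nonneg (Real.sqrt_nonneg _) (Real.exp_pos _).le

lemma wgt_continuous : Continuous wgt := by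
  unfold wgt uvDist
  fun_prop

lemma uvDist_le (r : R4) : uvDist r ≤ 2 * ‖r‖ := by
  have hn : ‖r‖ = Real.sqrt (r 0 ^ 2 + r 1 ^ 2 + r 2 ^ 2 + r 3 ^ 2) := by
    rw [EuclideanSpace.norm_eq, Fin.sum_univ_four]
    norm_num [Real.norm_eq_abs, sq_abs]
  have h4 : (r 0 - r 2) ^ 2 + (r 1 - r 3) ^ 2
      ≤ 4 * (r 0 ^ 2 + r 1 ^ 2 + r 2 ^ 2 + r 3 ^ 2) := by
    nlinarith [sq_nonneg (r 0 + r 2), sq_nonneg (r 1 + r 3), sq_nonneg (r 0 - r 2),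
      sq_nonneg (r 1 - r 3)]
  calc uvDist r ≤ Real.sqrt (4 * (r 0 ^ 2 + r 1 ^ 2 + r 2 ^ 2 + r 3 ^ 2)) :=
        Real.sqrt_le_sqrt h4
    _ = 2 * ‖r‖ := by
        rw [hn, show (4:ℝ) * (r 0 ^ 2 + r 1 ^ 2 + r 2 ^ 2 + r 3 ^ 2)
            = 2 ^ 2 * (r 0 ^ 2 + r 1 ^ 2 + r 2 ^ 2 + r 3 ^ 2) from by ring,
          Real.sqrt_mul (by norm_num : (0:ℝ) ≤ 2 ^ 2),
          Real.sqrt_sq (by norm_num : (0:ℝ) ≤ 2)]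

lemma uvDist_nonneg (r : R4) : 0 ≤ uvDist r := Real.sqrt_nonneg _

lemma wgt_small {ε : ℝ} (hε : 0 < ε) {r : R4} (h1 : 1 ≤ ‖r‖) (h2 : 16 / ε ≤ ‖r‖) :
    2 * wgt r ≤ ε := by
  set t := ‖r‖ with ht_def
  have ht : 0 < t := lt_of_lt_of_le one_pos h1
  have hexp : (1 + t / 2) ^ 2 ≤ Real.exp t := by
    have h := Real.add_one_le_exp (t / 2)
    have h2' : (1 + t / 2) ^ 2 ≤ Real.exp (t / 2) ^ 2 := by
      nlinarith [Real.exp_pos (t / 2)]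
    calc (1 + t / 2) ^ 2 ≤ Real.exp (t / 2) ^ 2 := h2'
      _ = Real.exp t := by rw [sq, ← Real.exp_add]; norm_num
  have hepos := Real.exp_pos t
  have hin : t ^ 2 * Real.exp (-t) ≤ 4 := by
    rw [Real.exp_neg, mul_inv_le_iff₀ hepos]
    nlinarith
  have hw : wgt r ≤ 2 * t * Real.exp (-t) := by
    unfold wgt
    nlinarith [uvDist_le r, uvDist_nonneg r, Real.exp_pos (-‖r‖)]
  have h16 : (16:ℝ) ≤ ε * t := by
    rw [div_le_iff₀ hε] at h2; linarith
  have hmid : 4 * t * Real.exp (-t) ≤ 16 / t := by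
    rw [le_div_iff₀ ht]
    have := Real.exp_pos (-t)
    nlinarith
  have hlast : 16 / t ≤ ε := by
    rw [div_le_iff₀ ht]; linarith
  calc 2 * wgt r ≤ 4 * t * Real.exp (-t) := by nlinarith
    _ ≤ 16 / t := hmid
    _ ≤ ε := hlast

lemma dist_Emap_pair {x : R4} (s t : EReal) :
    dist (Emap (x, s)) (Emap (x, t)) = wgt x * |squash s - squash t| := by
  rw [Prod.dist_eq]
  simp only [Emap_def, dist_self, Real.dist_eq]
  rw [max_eq_right (abs_nonneg _), ← mul_sub, abs_mul, abs_of_nonneg (wgt_nonneg x)]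

lemma dist_Emap_pair_le {x : R4} (s t : EReal) :
    dist (Emap (x, s)) (Emap (x, t)) ≤ 2 * wgt x := by
  rw [dist_Emap_pair]
  have h1 := squash_le_one s
  have h2 := squash_le_one t
  have h3 := neg_one_le_squash s
  have h4 := neg_one_le_squash t
  have habs : |squash s - squash t| ≤ 2 := abs_le.2 ⟨by linarith, by linarith⟩
  nlinarith [wgt_nonneg x]

lemma infEdist_le_dist {S : Set (R4 × ℝ)} {p q : R4 × ℝ} (hq : q ∈ S) :
    EMetric.infEdist p S ≤ ENNReal.ofReal (dist p q) := by
  rw [← edist_dist]; exact EMetric.infEdist_le_edist_of_mem hq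

lemma norm_bound {ε : ℝ} (hε : 0 < ε) {x : R4} {S : Set (R4 × ℝ)} {s : EReal}
    (htop : Emap (x, ⊤) ∈ S)
    (h : ENNReal.ofReal ε < EMetric.infEdist (Emap (x, s)) S) :
    ‖x‖ ≤ max 1 (16 / ε) := by
  by_contra hc
  push_neg at hc
  have h1 : (1:ℝ) ≤ ‖x‖ := ((le_max_left _ _).trans_lt hc).le
  have h2 : 16 / ε ≤ ‖x‖ := ((le_max_right _ _).trans_lt hc).le
  have hsmall := wgt_small hε h1 h2
  have hle : EMetric.infEdist (Emap (x, s)) S ≤ ENNReal.ofReal ε :=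
    (infEdist_le_dist htop).trans (ENNReal.ofReal_le_ofReal ((dist_Emap_pair_le s ⊤).trans hsmall))
  exact absurd h (not_lt.2 hle)

lemma lsc_le_liminf {f : R4 → EReal} (hf : LowerSemicontinuous f) {u : ℕ → R4} {x : R4}
    (hu : Tendsto u atTop (𝓝 x)) : f x ≤ liminf (fun k => f (u k)) atTop := by
  rw [le_liminf_iff]
  exact fun y hy => hu.eventually (hf x y hy)

lemma liminf_le_subseq (u : ℕ → EReal) {χ : ℕ → ℕ} (hχ : StrictMono χ) :
    liminf u atTop ≤ liminf (fun k => u (χ k)) atTop := by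
  rw [show (fun k => u (χ k)) = u ∘ χ from rfl, liminf_comp u χ atTop]
  exact liminf_le_liminf_of_le hχ.tendsto_atTop

lemma limsup_subseq_le (u : ℕ → EReal) {χ : ℕ → ℕ} (hχ : StrictMono χ) :
    limsup (fun k => u (χ k)) atTop ≤ limsup u atTop := by
  rw [show (fun k => u (χ k)) = u ∘ χ from rfl, limsup_comp u χ atTop]
  exact limsup_le_limsup_of_le hχ.tendsto_atTop

lemma tendsto_max_squash {u : ℕ → EReal} {s : EReal} {σ : ℝ} (hσ : squash s = σ)
    (hσ2 : -1 ≤ σ) (hu : limsup u atTop ≤ s) :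
    Tendsto (fun k => max σ (squash (u k))) atTop (𝓝 σ) := by
  rw [Metric.tendsto_atTop]
  intro η hη
  have key : ∀ᶠ k in atTop, squash (u k) < σ + η := by
    rcases lt_or_ge 1 (σ + η) with hcase | hcase
    · exact Eventually.of_forall fun k => lt_of_le_of_lt (squash_le_one _) hcase
    · have hτ1 : σ + η / 2 < 1 := by linarith
      have hτ2 : -1 < σ + η / 2 := by linarith
      have hsc : s < unsquash (σ + η / 2) := by
        have hlt : squash s < squash (unsquash (σ + η / 2)) := by
          rw [hσ, squash_unsquash hτ2.le hτ1.le]; linarith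
        by_contra hcon
        push_neg at hcon
        exact absurd (squash_mono hcon) (not_le.2 hlt)
      refine (eventually_lt_of_limsup_lt (lt_of_le_of_lt hu hsc)).mono fun k hk => ?_
      calc squash (u k) ≤ squash (unsquash (σ + η / 2)) := squash_mono hk.le
        _ = σ + η / 2 := squash_unsquash hτ2.le hτ1.le
        _ < σ + η := by linarith
  rw [eventually_atTop] at key
  obtain ⟨N, hN⟩ := key
  refine ⟨N, fun k hk => ?_⟩
  have hm1 : max σ (squash (u k)) < σ + η := max_lt (by linarith) (hN k hk)
  have hm2 : σ ≤ max σ (squash (u k)) := le_max_left _ _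
  rw [Real.dist_eq, abs_of_nonneg (by linarith)]
  linarith

lemma interleave_tendsto {χ : ℕ → ℕ} (hχ : StrictMono χ) {u : ℕ → R4} {x : R4}
    (hu : Tendsto u atTop (𝓝 x)) :
    ∃ y : ℕ → R4, Tendsto y atTop (𝓝 x) ∧ ∀ k, y (χ k) = u k := by
  classical
  refine ⟨fun n => if h : ∃ k, χ k = n then u h.choose else x, ?_, ?_⟩
  · rw [Metric.tendsto_atTop]
    intro δ hδ
    obtain ⟨K, hK⟩ := Metric.tendsto_atTop.1 hu δ hδ
    refine ⟨χ K, fun n hn => ?_⟩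
    by_cases h : ∃ k, χ k = n
    · have hk := h.choose_spec
      have hKle : K ≤ h.choose := by
        by_contra hlt
        push_neg at hlt
        have := hχ hlt
        omega
      simp only [dif_pos h]
      exact hK _ hKle
    · simp only [dif_neg h, dist_self]
      exact hδ
  · intro k
    have h : ∃ k', χ k' = χ k := ⟨k, rfl⟩
    have heq : h.choose = k := hχ.injective h.choose_spec
    simp only [dif_pos h, heq]

lemma le_unsquash_of_le_liminf {v : ℕ → EReal} {a : EReal} {σ : ℝ}
    (ha : a ≤ liminf v atTop) (hσ2 : -1 ≤ σ) (hσ1 : σ ≤ 1)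
    (hlim : Tendsto (fun k => squash (v k)) atTop (𝓝 σ)) : a ≤ unsquash σ := by
  refine ha.trans ?_
  by_contra hcon
  push_neg at hcon
  obtain ⟨c, hc1, hc2⟩ := exists_between hcon
  have hev : ∀ᶠ k in atTop, squash c ≤ squash (v k) :=
    (eventually_lt_of_lt_liminf hc2).mono fun k hk => squash_mono hk.le
  have hgec : squash c ≤ σ := ge_of_tendsto hlim hev
  have hlt : σ < squash c := by
    have h := squash_strictMono hc1
    rwa [squash_unsquash hσ2 hσ1] at h
  linarith

lemma dirB (f : R4 → EReal) (fn : ℕ → R4 → EReal)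
    (hliminf : ∀ (x : R4) (xs : ℕ → R4), Tendsto xs atTop (nhds x) →
      f x ≤ liminf (fun n => fn n (xs n)) atTop)
    {ε : ℝ} (hε : 0 < ε) :
    ∀ᶠ n in atTop, ∀ p ∈ Emap '' epigraph (fn n),
      EMetric.infEdist p (Emap '' epigraph f) ≤ ENNReal.ofReal ε := by
  by_contra hcon
  rw [Filter.not_eventually] at hcon
  have hcon' : ∃ᶠ n in atTop, ∃ x s, fn n x ≤ s ∧
      ENNReal.ofReal ε < EMetric.infEdist (Emap (x, s)) (Emap '' epigraph f) := by
    refine hcon.mono fun n hn => ?_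
    push_neg at hn
    obtain ⟨p, hp, hlt⟩ := hn
    obtain ⟨⟨x, s⟩, hxs, rfl⟩ := hp
    exact ⟨x, s, hxs, hlt⟩
  obtain ⟨φ, hφ, hP⟩ := extraction_of_frequently_atTop hcon'
  choose xs ss hmem hdist using hP
  have hxR : ∀ k, xs k ∈ Metric.closedBall (0 : R4) (max 1 (16 / ε)) := by
    intro k
    rw [Metric.mem_closedBall, dist_zero_right]
    exact norm_bound hε
      (Set.mem_image_of_mem Emap (by simp only [epigraph, Set.mem_setOf_eq]; exact le_top : ((xs k, ⊤) : R4 × EReal) ∈ epigraph f)) (hdist k)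
  obtain ⟨x, -, ψ, hψ, hxlim⟩ :=
    (isCompact_closedBall (0 : R4) (max 1 (16 / ε))).tendsto_subseq hxR
  have hσmem : ∀ k, squash (ss (ψ k)) ∈ Set.Icc (-1 : ℝ) 1 :=
    fun k => ⟨neg_one_le_squash _, squash_le_one _⟩
  obtain ⟨σ, hσIcc, ρ, hρ, hσlim⟩ :=
    (isCompact_Icc (a := (-1:ℝ)) (b := 1)).tendsto_subseq hσmem
  have hσ2 : -1 ≤ σ := hσIcc.1
  have hσ1 : σ ≤ 1 := hσIcc.2
  have hχ : StrictMono (fun k => φ (ψ (ρ k))) := hφ.comp (hψ.comp hρ)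
  have hx'lim : Tendsto (fun k => xs (ψ (ρ k))) atTop (𝓝 x) := hxlim.comp hρ.tendsto_atTop
  have hσ'lim : Tendsto (fun k => squash (ss (ψ (ρ k)))) atTop (𝓝 σ) := hσlim
  obtain ⟨y, hy, hyχ⟩ := interleave_tendsto hχ hx'lim
  have hfx : f x ≤ liminf (fun k => ss (ψ (ρ k))) atTop := by
    refine (hliminf x y hy).trans ?_
    refine (liminf_le_subseq _ hχ).trans ?_
    refine liminf_le_liminf (Eventually.of_forall fun k => ?_)
    rw [hyχ k]
    exact hmem (ψ (ρ k))
  have hfs : f x ≤ unsquash σ := le_unsquash_of_le_liminf hfx hσ2 hσ1 hσ'lim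
  have hq : Emap (x, unsquash σ) ∈ Emap '' epigraph f := Set.mem_image_of_mem _ hfs
  have hlimE : Tendsto (fun k => Emap (xs (ψ (ρ k)), ss (ψ (ρ k)))) atTop
      (𝓝 (Emap (x, unsquash σ))) := by
    simp only [Emap_def, squash_unsquash hσ2 hσ1]
    exact hx'lim.prodMk_nhds (((wgt_continuous.tendsto x).comp hx'lim).mul hσ'lim)
  have hnear : ∀ᶠ k in atTop,
      dist (Emap (xs (ψ (ρ k)), ss (ψ (ρ k)))) (Emap (x, unsquash σ)) < ε :=
    (tendsto_iff_dist_tendsto_zero.1 hlimE).eventually_lt_const hε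
  obtain ⟨k, hk⟩ := hnear.exists
  have hle : EMetric.infEdist (Emap (xs (ψ (ρ k)), ss (ψ (ρ k)))) (Emap '' epigraph f)
      ≤ ENNReal.ofReal ε :=
    (infEdist_le_dist hq).trans (ENNReal.ofReal_le_ofReal hk.le)
  exact absurd (hdist (ψ (ρ k))) (not_lt.2 hle)

lemma dirA (f : R4 → EReal) (fn : ℕ → R4 → EReal)
    (hf : LowerSemicontinuous f)
    (hlimsup : ∀ x : R4, ∃ xs : ℕ → R4, Tendsto xs atTop (nhds x) ∧
      limsup (fun n => fn n (xs n)) atTop ≤ f x)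
    {ε : ℝ} (hε : 0 < ε) :
    ∀ᶠ n in atTop, ∀ p ∈ Emap '' epigraph f,
      EMetric.infEdist p (Emap '' epigraph (fn n)) ≤ ENNReal.ofReal ε := by
  by_contra hcon
  rw [Filter.not_eventually] at hcon
  have hcon' : ∃ᶠ n in atTop, ∃ x s, f x ≤ s ∧
      ENNReal.ofReal ε < EMetric.infEdist (Emap (x, s)) (Emap '' epigraph (fn n)) := by
    refine hcon.mono fun n hn => ?_
    push_neg at hn
    obtain ⟨p, hp, hlt⟩ := hn
    obtain ⟨⟨x, s⟩, hxs, rfl⟩ := hp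
    exact ⟨x, s, hxs, hlt⟩
  obtain ⟨φ, hφ, hP⟩ := extraction_of_frequently_atTop hcon'
  choose xs ss hmem hdist using hP
  have hxR : ∀ k, xs k ∈ Metric.closedBall (0 : R4) (max 1 (16 / ε)) := by
    intro k
    rw [Metric.mem_closedBall, dist_zero_right]
    exact norm_bound hε
      (Set.mem_image_of_mem Emap (by simp only [epigraph, Set.mem_setOf_eq]; exact le_top : ((xs k, ⊤) : R4 × EReal) ∈ epigraph (fn (φ k))))
      (hdist k)
  obtain ⟨x, -, ψ, hψ, hxlim⟩ :=
    (isCompact_closedBall (0 : R4) (max 1 (16 / ε))).tendsto_subseq hxR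
  have hσmem : ∀ k, squash (ss (ψ k)) ∈ Set.Icc (-1 : ℝ) 1 :=
    fun k => ⟨neg_one_le_squash _, squash_le_one _⟩
  obtain ⟨σ, hσIcc, ρ, hρ, hσlim⟩ :=
    (isCompact_Icc (a := (-1:ℝ)) (b := 1)).tendsto_subseq hσmem
  have hσ2 : -1 ≤ σ := hσIcc.1
  have hσ1 : σ ≤ 1 := hσIcc.2
  have hχ : StrictMono (fun k => φ (ψ (ρ k))) := hφ.comp (hψ.comp hρ)
  have hx'lim : Tendsto (fun k => xs (ψ (ρ k))) atTop (𝓝 x) := hxlim.comp hρ.tendsto_atTop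
  have hσ'lim : Tendsto (fun k => squash (ss (ψ (ρ k)))) atTop (𝓝 σ) := hσlim
  have hfx : f x ≤ liminf (fun k => ss (ψ (ρ k))) atTop :=
    (lsc_le_liminf hf hx'lim).trans
      (liminf_le_liminf (Eventually.of_forall fun k => hmem (ψ (ρ k))))
  have hfs : f x ≤ unsquash σ := le_unsquash_of_le_liminf hfx hσ2 hσ1 hσ'lim
  obtain ⟨ys, hys, hysl⟩ := hlimsup x
  have hys' : Tendsto (fun k => ys (φ (ψ (ρ k)))) atTop (𝓝 x) := hys.comp hχ.tendsto_atTop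
  have hulimsup : limsup (fun k => fn (φ (ψ (ρ k))) (ys (φ (ψ (ρ k))))) atTop ≤ unsquash σ :=
    (limsup_subseq_le _ hχ).trans (hysl.trans hfs)
  have hqmem : ∀ k, Emap (ys (φ (ψ (ρ k))), unsquash σ ⊔ fn (φ (ψ (ρ k))) (ys (φ (ψ (ρ k)))))
      ∈ Emap '' epigraph (fn (φ (ψ (ρ k)))) :=
    fun k => Set.mem_image_of_mem _ (by simp only [epigraph, Set.mem_setOf_eq]; exact le_sup_right)
  have hsq : Tendsto
      (fun k => squash (unsquash σ ⊔ fn (φ (ψ (ρ k))) (ys (φ (ψ (ρ k)))))) atTop (𝓝 σ) := by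
    have hmain := tendsto_max_squash (squash_unsquash hσ2 hσ1) hσ2 hulimsup
    have heq : ∀ k, squash (unsquash σ ⊔ fn (φ (ψ (ρ k))) (ys (φ (ψ (ρ k)))))
        = max σ (squash (fn (φ (ψ (ρ k))) (ys (φ (ψ (ρ k)))))) := by
      intro k
      rw [show unsquash σ ⊔ fn (φ (ψ (ρ k))) (ys (φ (ψ (ρ k))))
          = max (unsquash σ) (fn (φ (ψ (ρ k))) (ys (φ (ψ (ρ k))))) from rfl,
        squash_mono.map_max, squash_unsquash hσ2 hσ1]
    simp only [heq]
    exact hmain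
  have hq'lim : Tendsto
      (fun k => Emap (ys (φ (ψ (ρ k))), unsquash σ ⊔ fn (φ (ψ (ρ k))) (ys (φ (ψ (ρ k))))))
      atTop (𝓝 (x, wgt x * σ)) := by
    simp only [Emap_def]
    exact hys'.prodMk_nhds (((wgt_continuous.tendsto x).comp hys').mul hsq)
  have hplim : Tendsto (fun k => Emap (xs (ψ (ρ k)), ss (ψ (ρ k)))) atTop
      (𝓝 (x, wgt x * σ)) := by
    simp only [Emap_def]
    exact hx'lim.prodMk_nhds (((wgt_continuous.tendsto x).comp hx'lim).mul hσ'lim)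
  have hdd : Tendsto (fun k => dist (Emap (xs (ψ (ρ k)), ss (ψ (ρ k))))
      (Emap (ys (φ (ψ (ρ k))), unsquash σ ⊔ fn (φ (ψ (ρ k))) (ys (φ (ψ (ρ k))))))) atTop
      (𝓝 0) := by
    have h0 := hplim.dist hq'lim
    rwa [dist_self] at h0
  obtain ⟨k, hk⟩ := (hdd.eventually_lt_const hε).exists
  have hle : EMetric.infEdist (Emap (xs (ψ (ρ k)), ss (ψ (ρ k))))
      (Emap '' epigraph (fn (φ (ψ (ρ k))))) ≤ ENNReal.ofReal ε :=
    (infEdist_le_dist (hqmem k)).trans (ENNReal.ofReal_le_ofReal hk.le)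
  exact absurd (hdist (ψ (ρ k))) (not_lt.2 hle)

/-- if `f, fₙ : ℝ⁴ → ℝ ∪ {+∞}` are lower semicontinuous,
`liminf fₙ(xₙ) ≥ f(x)` along every convergent sequence `xₙ → x`, and every `x`
admits a sequence `xₙ → x` with `limsup fₙ(xₙ) ≤ f(x)`, then the epigraphs
converge: the Hausdorff distance between `E(𝔢 fₙ)` and `E(𝔢 f)` tends to `0`. -/
theorem epigraph_convergence (f : R4 → EReal) (fn : ℕ → R4 → EReal)
    (hf : LowerSemicontinuous f) (hfn : ∀ n, LowerSemicontinuous (fn n))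
    (hfbot : ∀ x, f x ≠ ⊥) (hfnbot : ∀ n x, fn n x ≠ ⊥)
    (hliminf : ∀ (x : R4) (xs : ℕ → R4), Tendsto xs atTop (nhds x) →
      f x ≤ liminf (fun n => fn n (xs n)) atTop)
    (hlimsup : ∀ x : R4, ∃ xs : ℕ → R4, Tendsto xs atTop (nhds x) ∧
      limsup (fun n => fn n (xs n)) atTop ≤ f x) :
    Tendsto (fun n => EMetric.hausdorffEdist (Emap '' epigraph (fn n)) (Emap '' epigraph f))
      atTop (nhds 0) := by

  rw [ENNReal.tendsto_atTop_zero]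
  intro ε hε
  have hδtop : min ε 1 ≠ ⊤ := ne_top_of_le_ne_top ENNReal.one_ne_top (min_le_right _ _)
  have hδpos : 0 < min ε 1 := lt_min hε (by norm_num)
  have hδ0 : 0 < (min ε 1).toReal := ENNReal.toReal_pos hδpos.ne' hδtop
  have hA := dirA f fn hf hlimsup hδ0
  have hB := dirB f fn hliminf hδ0
  obtain ⟨N, hN⟩ := eventually_atTop.1 (hA.and hB)
  refine ⟨N, fun n hn => ?_⟩
  calc EMetric.hausdorffEdist (Emap '' epigraph (fn n)) (Emap '' epigraph f)
      ≤ ENNReal.ofReal (min ε 1).toReal :=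
        EMetric.hausdorffEdist_le_of_infEdist (hN n hn).2 (hN n hn).1
    _ = min ε 1 := ENNReal.ofReal_toReal hδtop
    _ ≤ ε := min_le_left _ _


end
end

section
/- Let f : [0,∞) → ℝ be a fixed continuous function and let W_2, W_3, … be independent standard Brownian motions. Then for every fixed t > 0, almost surely L^f(t,n) → +∞ as n → ∞. -/
/-!
The path that stays at time `0` up to level `i - 1` and jumps to time `t` at level `i` shows
`L^f(t,n) ≥ f(0) + W_i(t)` for all `2 ≤ i ≤ n`. The `W_i(t)` are i.i.d. `N(0,t)`, so by the
second Borel–Cantelli lemma almost surely they exceed every level infinitely often.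
-/

open MeasureTheory ProbabilityTheory Filter

noncomputable section

/-- A Brownian motion started at `0` with variance parameter `σ² = v`:
a stochastic process with `W 0 = 0` a.s., a.s. continuous paths, and
independent increments `W t - W s ∼ N(0, v (t - s))` for `0 ≤ s ≤ t`. -/
def IsBrownianMotion {Ω : Type*} [MeasurableSpace Ω] (P : Measure Ω) (v : NNReal)
    (W : ℝ → Ω → ℝ) : Prop :=
  (∀ t : ℝ, Measurable (W t)) ∧
  (∀ᵐ ω ∂P, W 0 ω = 0) ∧
  (∀ᵐ ω ∂P, Continuous fun t => W t ω) ∧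
  (∀ s t : ℝ, 0 ≤ s → s ≤ t →
    Measure.map (fun ω => W t ω - W s ω) P = gaussianReal 0 (v * (t - s).toNNReal)) ∧
  (∀ (n : ℕ) (ts : ℕ → ℝ), Monotone ts → 0 ≤ ts 0 →
    iIndepFun
      (fun k : Fin n => fun ω => W (ts (k + 1)) ω - W (ts k) ω) P)

/-- Last passage value with boundary condition `f`:
`L^f(t,n) = sup_{0 = t₀ ≤ t₁ ≤ … ≤ tₙ = t} ( f(t₁) + ∑_{i=2}^n (Wᵢ(tᵢ) - Wᵢ(tᵢ₋₁)) )`. -/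
def lppBoundary (f : ℝ → ℝ) (W : ℕ → ℝ → ℝ) (t : ℝ) (n : ℕ) : ℝ :=
  sSup {v : ℝ | ∃ ts : ℕ → ℝ, ts 0 = 0 ∧ ts n = t ∧ (∀ i < n, ts i ≤ ts (i + 1)) ∧
    v = f (ts 1) + ∑ i ∈ Finset.Icc 2 n, (W i (ts i) - W i (ts (i - 1)))}

def lppValues (f : ℝ → ℝ) (g : ℕ → ℝ → ℝ) (t : ℝ) (n : ℕ) : Set ℝ :=
  {v : ℝ | ∃ ts : ℕ → ℝ, ts 0 = 0 ∧ ts n = t ∧ (∀ i < n, ts i ≤ ts (i + 1)) ∧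
    v = f (ts 1) + ∑ i ∈ Finset.Icc 2 n, (g i (ts i) - g i (ts (i - 1)))}

section Deterministic

variable {f : ℝ → ℝ} {g : ℕ → ℝ → ℝ} {t : ℝ} {n : ℕ}

lemma lppBoundary_eq_sSup : lppBoundary f g t n = sSup (lppValues f g t n) := rfl

lemma mem_Icc_of_chain {ts : ℕ → ℝ} (h0 : ts 0 = 0) (hn : ts n = t)
    (hstep : ∀ i < n, ts i ≤ ts (i + 1)) {k : ℕ} (hk : k ≤ n) : ts k ∈ Set.Icc 0 t := by
  have hle : ∀ {i j : ℕ}, i ≤ j → j ≤ n → ts i ≤ ts j := by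
    intro i j hij hjn
    induction j, hij using Nat.le_induction with
    | base => exact le_rfl
    | succ j _ ih => exact (ih (by omega)).trans (hstep j (by omega))
  exact ⟨h0 ▸ hle k.zero_le hk, hn ▸ hle hk le_rfl⟩

lemma bddAbove_lppValues (hf : ContinuousOn f (Set.Icc 0 t))
    (hg : ∀ i, ContinuousOn (g i) (Set.Icc 0 t)) (hn : n ≠ 0) :
    BddAbove (lppValues f g t n) := by
  obtain ⟨Cf, hCf⟩ := isCompact_Icc.exists_bound_of_continuousOn hf
  choose C hC using fun i => isCompact_Icc.exists_bound_of_continuousOn (hg i)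
  refine ⟨Cf + ∑ i ∈ Finset.Icc 2 n, 2 * C i, ?_⟩
  rintro v ⟨ts, h0, hn', hstep, rfl⟩
  have hmem : ∀ k ≤ n, ts k ∈ Set.Icc 0 t := fun k hk => mem_Icc_of_chain h0 hn' hstep hk
  refine add_le_add (le_of_abs_le (hCf _ (hmem 1 (by omega)))) (Finset.sum_le_sum fun i hi => ?_)
  obtain ⟨-, hin⟩ := Finset.mem_Icc.1 hi
  have ha := abs_le.1 (hC i _ (hmem i hin))
  have hb := abs_le.1 (hC i _ (hmem (i - 1) (by omega)))
  linarith [ha.1, ha.2, hb.1, hb.2]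

lemma add_sub_mem_lppValues (ht : 0 ≤ t) {i : ℕ} (hi : 2 ≤ i) (hin : i ≤ n) :
    f 0 + (g i t - g i 0) ∈ lppValues f g t n := by
  refine ⟨fun j => if j < i then 0 else t, by simp; omega, by simp; omega, ?_, ?_⟩
  · intro j _
    dsimp only
    split_ifs <;> first | exact le_rfl | exact ht | omega
  · dsimp only
    rw [if_pos (by omega : 1 < i), Finset.sum_eq_single_of_mem i (Finset.mem_Icc.2 ⟨hi, hin⟩)]
    · simp [show i - 1 < i by omega]
    · intro j _ hji
      rcases hji.lt_or_gt with h | h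
      · simp [h, show j - 1 < i by omega]
      · simp [show ¬j < i by omega, show ¬j - 1 < i by omega]

lemma add_le_lppBoundary (hf : ContinuousOn f (Set.Icc 0 t))
    (hg : ∀ i, ContinuousOn (g i) (Set.Icc 0 t)) (ht : 0 ≤ t) {i : ℕ} (hgi : g i 0 = 0)
    (hi : 2 ≤ i) (hin : i ≤ n) : f 0 + g i t ≤ lppBoundary f g t n := by
  have hmem := add_sub_mem_lppValues (f := f) (g := g) ht hi hin
  rw [hgi, sub_zero] at hmem
  rw [lppBoundary_eq_sSup]
  exact le_csSup (bddAbove_lppValues hf hg (by omega)) hmem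

theorem tendsto_lppBoundary_atTop (hf : ContinuousOn f (Set.Icc 0 t))
    (hg : ∀ i, ContinuousOn (g i) (Set.Icc 0 t)) (ht : 0 ≤ t) (hg0 : ∀ i, g i 0 = 0)
    (hfreq : ∀ b : ℝ, ∃ᶠ i in atTop, b < g i t) :
    Tendsto (lppBoundary f g t) atTop atTop := by
  refine tendsto_atTop_atTop.2 fun b => ?_
  obtain ⟨i, hi, hbi⟩ := frequently_atTop.1 (hfreq (b - f 0)) 2
  exact ⟨i, fun n hin => by linarith [add_le_lppBoundary hf hg ht (hg0 i) hi hin]⟩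

end Deterministic

lemma gaussianReal_Ioi_ne_zero {v : NNReal} (hv : v ≠ 0) (μ a : ℝ) :
    gaussianReal μ v (Set.Ioi a) ≠ 0 := fun h => by
  simpa [Real.volume_Ioi] using gaussianReal_absolutelyContinuous' μ hv h

lemma IsBrownianMotion.map_eq_gaussianReal {Ω : Type*} [MeasurableSpace Ω] {P : Measure Ω}
    {v : NNReal} {W : ℝ → Ω → ℝ} (hW : IsBrownianMotion P v W) {t : ℝ} (ht : 0 ≤ t) :
    P.map (W t) = gaussianReal 0 (v * t.toNNReal) := by
  have hincr : W t =ᵐ[P] fun ω => W t ω - W 0 ω := by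
    filter_upwards [hW.2.1] with ω hω using by rw [hω, sub_zero]
  rw [Measure.map_congr hincr, hW.2.2.2.1 0 t le_rfl ht, sub_zero]

lemma ae_frequently_lt_of_iIndepFun {Ω : Type*} [MeasurableSpace Ω] {P : Measure Ω}
    {X : ℕ → Ω → ℝ} (hX : ∀ i, Measurable (X i)) (hind : iIndepFun X P) {μ : Measure ℝ}
    (hlaw : ∀ i, P.map (X i) = μ) (hμ : ∀ b, μ (Set.Ioi b) ≠ 0) :
    ∀ᵐ ω ∂P, ∀ b : ℝ, ∃ᶠ i in atTop, b < X i ω := by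
  have := hind.isProbabilityMeasure
  have hM : ∀ M : ℕ, ∀ᵐ ω ∂P, ∃ᶠ i in atTop, (M : ℝ) < X i ω := by
    intro M
    set s : ℕ → Set Ω := fun i => X i ⁻¹' Set.Ioi (M : ℝ)
    have hs : ∀ i, MeasurableSet (s i) := fun i => hX i measurableSet_Ioi
    have hsind : iIndepSet s P := (iIndepSet_iff_meas_biInter hs).2 fun S =>
      hind.meas_biInter fun i _ => ⟨Set.Ioi (M : ℝ), measurableSet_Ioi, rfl⟩
    have hsum : ∑' i, P (s i) = ⊤ := by
      simp_rw [s, ← Measure.map_apply (hX _) measurableSet_Ioi, hlaw]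
      exact ENNReal.tsum_const_eq_top_of_ne_zero (hμ M)
    filter_upwards [(mem_ae_iff_prob_eq_one (MeasurableSet.measurableSet_limsup hs)).2
      (measure_limsup_eq_one hs hsind hsum)] with ω hω
    exact mem_limsup_iff_frequently_mem.1 hω
  filter_upwards [ae_all_iff.2 hM] with ω hω b
  obtain ⟨M, hbM⟩ := exists_nat_ge b
  exact (hω M).mono fun i hi => hbM.trans_lt hi

theorem lppBoundary_tendsto_atTop_general {Ω : Type*} [MeasurableSpace Ω] (P : Measure Ω)
    (f : ℝ → ℝ) (hf : ContinuousOn f (Set.Ici 0))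
    (W : ℕ → ℝ → Ω → ℝ) (hBM : ∀ i, IsBrownianMotion P 1 (W i))
    (hindep : iIndepFun
      (fun (i : ℕ) (ω : Ω) => fun t : ℝ => W i t ω) P) :
    ∀ t > (0 : ℝ), ∀ᵐ ω ∂P,
      Tendsto (fun n => lppBoundary f (fun i s => W i s ω) t n) atTop atTop := by
  intro t ht
  have hlaw : ∀ i, P.map (W i t) = gaussianReal 0 t.toNNReal := fun i => by
    simpa using (hBM i).map_eq_gaussianReal ht.le
  have hfreq := ae_frequently_lt_of_iIndepFun (fun i => (hBM i).1 t)
    (hindep.comp (fun _ w => w t) fun _ => measurable_pi_apply t) hlaw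
    (gaussianReal_Ioi_ne_zero (Real.toNNReal_pos.2 ht).ne' 0)
  have hzero : ∀ᵐ ω ∂P, ∀ i, W i 0 ω = 0 := ae_all_iff.2 fun i => (hBM i).2.1
  have hcont : ∀ᵐ ω ∂P, ∀ i, Continuous (W i · ω) := ae_all_iff.2 fun i => (hBM i).2.2.1
  filter_upwards [hzero, hcont, hfreq] with ω hω0 hωc hωfreq
  exact tendsto_lppBoundary_atTop (hf.mono Set.Icc_subset_Ici_self)
    (fun i => (hωc i).continuousOn) ht.le hω0 hωfreq

/-- for a fixed continuous boundary `f : [0,∞) → ℝ` and independent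
standard Brownian motions `W₂, W₃, …`, for every fixed `t > 0` almost surely
`L^f(t,n) → +∞` as `n → ∞`. -/
theorem lppBoundary_tendsto_atTop {Ω : Type*} [MeasurableSpace Ω] (P : Measure Ω)
    [IsProbabilityMeasure P] (f : ℝ → ℝ) (hf : ContinuousOn f (Set.Ici 0))
    (W : ℕ → ℝ → Ω → ℝ) (hBM : ∀ i, IsBrownianMotion P 1 (W i))
    (hindep : iIndepFun
      (fun (i : ℕ) (ω : Ω) => fun t : ℝ => W i t ω) P) :
    ∀ t > (0 : ℝ), ∀ᵐ ω ∂P,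
      Tendsto (fun n => lppBoundary f (fun i s => W i s ω) t n) atTop atTop :=
  lppBoundary_tendsto_atTop_general P f hf W hBM hindep

end
end

section
/- Fix j ∈ ℤ and v ∈ ℤ, let q : {i ∈ ℤ : i ≤ j+1} → ℤ satisfy q(j+1) = v, and let s : {i ∈ ℤ : i ≤ j} → ℤ be arbitrary. Define r(i) = s(i) − min_{l ∈ {i,…,j}} ( s(l) − q(l+1) − 1 ) for i ≤ j. Then r(j) = v + 1, and for every i < j one has the recursion r(i) = max( q(i+1) + 1, r(i+1) + s(i) − s(i+1) ). -/
/-- the deterministic discrete Skorokhod reflection identity.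
Fix `j, v ∈ ℤ`, `q` with `q(j+1) = v`, and an arbitrary `s`. Define
`r(i) = s(i) - min_{l ∈ {i,…,j}} ( s(l) - q(l+1) - 1 )` for `i ≤ j`. Then
`r(j) = v + 1`, and for every `i < j`,
`r(i) = max( q(i+1) + 1, r(i+1) + s(i) - s(i+1) )`. -/
theorem discrete_skorokhod_reflection (j v : ℤ) (q s : ℤ → ℤ) (hq : q (j + 1) = v) :
    letI r : ℤ → ℤ := fun i =>
      s i - sInf {x : ℤ | ∃ l : ℤ, i ≤ l ∧ l ≤ j ∧ x = s l - q (l + 1) - 1}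
    r j = v + 1 ∧ ∀ i < j, r i = max (q (i + 1) + 1) (r (i + 1) + s i - s (i + 1)) := by
  set f : ℤ → ℤ := fun l => s l - q (l + 1) - 1 with hf
  have hset : ∀ i : ℤ, {x : ℤ | ∃ l : ℤ, i ≤ l ∧ l ≤ j ∧ x = s l - q (l + 1) - 1}
      = f '' Set.Icc i j := by
    intro i
    ext x
    simp only [Set.mem_setOf_eq, Set.mem_image, Set.mem_Icc, hf]
    constructor
    · rintro ⟨l, h1, h2, h3⟩; exact ⟨l, ⟨h1, h2⟩, h3.symm⟩
    · rintro ⟨l, ⟨h1, h2⟩, h3⟩; exact ⟨l, h1, h2, h3.symm⟩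
  have hbdd : ∀ i : ℤ, BddBelow (f '' Set.Icc i j) :=
    fun i => ((Set.finite_Icc i j).image f).bddBelow
  have hne : ∀ i : ℤ, i ≤ j → (f '' Set.Icc i j).Nonempty :=
    fun i hi => (Set.nonempty_Icc.2 hi).image f
  constructor
  · have : Set.Icc j j = {j} := Set.Icc_self j
    simp only [hset, this]
    simp [hf, hq]
    ring
  · intro i hij
    have hins : f '' Set.Icc i j = insert (f i) (f '' Set.Icc (i + 1) j) := by
      have : Set.Icc i j = insert i (Set.Icc (i + 1) j) := by
        ext l
        simp only [Set.mem_Icc, Set.mem_insert_iff]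
        constructor
        · rintro ⟨h1, h2⟩
          rcases eq_or_lt_of_le h1 with h | h
          · exact Or.inl h.symm
          · exact Or.inr ⟨h, h2⟩
        · rintro (rfl | ⟨h1, h2⟩)
          · exact ⟨le_refl _, le_of_lt hij⟩
          · exact ⟨by omega, h2⟩
      rw [this, Set.image_insert_eq]
    simp only [hset]
    rw [hins, csInf_insert (hbdd _) (hne _ hij)]
    rcases le_total (f i) (sInf (f '' Set.Icc (i + 1) j)) with h | h
    · rw [min_eq_left h, max_eq_left (by simp only [hf] at h ⊢; omega)]
      simp only [hf]; ring
    · rw [min_eq_right h, max_eq_right (by simp only [hf] at h ⊢; omega)]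
      ring
end

section
/- Fix any sign configuration ξ : ℤ²_e → {−1,+1}, a time j ∈ ℤ and u ≤ v with (j,u),(j,v) ∈ ℤ²_e, and define the backward paths r_k^± and meeting times T_k as in the context. Then for every k ≥ 0 there exists a function s : {i ∈ ℤ : i ≤ j} → ℤ with s(i−1) − s(i) ∈ {−1,+1} for all i ≤ j, such that r_{k+1}^+(i) = s(i) − min_{l∈{i,…,j}} ( s(l) − r_k^+(l+1) − 1 ) holds for all i with T_k ≤ i ≤ j, with the convention r_k^+(j+1) = v. -/
/-! Backward paths of the web never cross: one backward step `y ↦ y - ξ(p, y)` is monotone on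
each parity class, so the maximum of several backward paths is again driven by `ξ` along itself.
Hence `r_{k+1}^+` solves the reflected recursion
`r_{k+1}^+(i-1) = max (r_k^+(i) + 1) (r_{k+1}^+(i) - ξ(i-1, r_{k+1}^+(i)))`, started from
`r_{k+1}^+(j) = v + 1`. Taking for `s` the walk started at `v + 1` that copies the increments of
`r_{k+1}^+`, the discrete Skorokhod lemma expresses such a recursion as `s` minus the running
minimum of `s - (r_k^+(· + 1) + 1)`. -/

noncomputable section

/-- Backward (dual) random walk web path started at `(i,n)`, after `k` backward steps. -/
def Ybwd (ξ : ℤ × ℤ → ℤ) (i n : ℤ) : ℕ → ℤ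
  | 0 => n
  | k + 1 => Ybwd ξ i n k - ξ (i - k - 1, Ybwd ξ i n k)

/-- `Yb ξ i n j` is the position at time `j ≤ i` of the backward random walk web
path `Ŷ_{(i,n)}`; it satisfies `Ŷ(i) = n` and `Ŷ(j-1) = Ŷ(j) - ξ(j-1, Ŷ(j))`. -/
def Yb (ξ : ℤ × ℤ → ℤ) (i n j : ℤ) : ℤ := Ybwd ξ i n (i - j).toNat

/-- The upper boundary paths `r_k^+`: `r_0^+ = Ŷ_{(j,v+1)}` and
`r_{k+1}^+(i) = max_{l ∈ {i,…,j}} Ŷ_{(l, r_k^+(l+1)+1)}(i)`, with the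
convention `r_k^+(j+1) = v`. -/
def rUp (ξ : ℤ × ℤ → ℤ) (j v : ℤ) : ℕ → ℤ → ℤ
  | 0 => fun i => Yb ξ j (v + 1) i
  | k + 1 => fun i =>
      sSup {x : ℤ | ∃ l : ℤ, i ≤ l ∧ l ≤ j ∧
        x = Yb ξ l ((if l = j then v else rUp ξ j v k (l + 1)) + 1) i}

/-- The lower boundary paths `r_k^-`: `r_0^- = Ŷ_{(j,u-1)}` and
`r_{k+1}^-(i) = min_{l ∈ {i,…,j}} Ŷ_{(l, r_k^-(l+1)-1)}(i)`, with the
convention `r_k^-(j+1) = u`. -/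
def rDown (ξ : ℤ × ℤ → ℤ) (j u : ℤ) : ℕ → ℤ → ℤ
  | 0 => fun i => Yb ξ j (u - 1) i
  | k + 1 => fun i =>
      sInf {x : ℤ | ∃ l : ℤ, i ≤ l ∧ l ≤ j ∧
        x = Yb ξ l ((if l = j then u else rDown ξ j u k (l + 1)) - 1) i}

/-- The meeting times `T_k` of the boundary paths `r_k^+` and `r_k^-`. -/
def Tmeet (ξ : ℤ × ℤ → ℤ) (j u v : ℤ) : ℕ → ℤ
  | 0 => sSup {i : ℤ | i ≤ j ∧ rUp ξ j v 0 i = rDown ξ j u 0 i}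
  | k + 1 => sSup {i : ℤ | i ≤ Tmeet ξ j u v k ∧ rUp ξ j v (k + 1) i = rDown ξ j u (k + 1) i}

open Set

lemma setOf_exists_Icc_eq_image {α : Type*} (f : ℤ → α) (i j : ℤ) :
    {x | ∃ l, i ≤ l ∧ l ≤ j ∧ x = f l} = f '' Icc i j := by
  ext x
  simp only [mem_ofPred_eq, mem_image, mem_Icc, and_assoc, eq_comm]

lemma image_Icc_sub_one_left {α : Type*} (f : ℤ → α) {i j : ℤ} (h : i ≤ j) :
    f '' Icc (i - 1) j = insert (f (i - 1)) (f '' Icc i j) := by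
  rw [← insert_Icc_left_eq_Icc_sub_one (by omega), image_insert_eq]

/-- The discrete Skorokhod lemma, run backwards in time from `j`. -/
theorem eq_sub_sInf_of_reflected {b d R s : ℤ → ℤ} {j : ℤ} (hRj : R j = b j)
    (hR : ∀ i ≤ j, R (i - 1) = max (b (i - 1)) (R i - d i)) (hsj : s j = b j)
    (hs : ∀ i ≤ j, s (i - 1) = s i - d i) :
    ∀ i ≤ j, R i = s i - sInf ((fun l => s l - b l) '' Icc i j) := by
  intro i hi
  induction i, hi using Int.leInductionDown with
  | base => simp [hRj, hsj]
  | pred i hi ih =>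
    have hbdd : BddBelow ((fun l => s l - b l) '' Icc i j) := ((finite_Icc i j).image _).bddBelow
    rw [image_Icc_sub_one_left _ hi, csInf_insert hbdd ((nonempty_Icc.2 hi).image _), hR i hi,
      hs i hi, ih]
    omega

section BackwardWeb

variable {ξ : ℤ × ℤ → ℤ}

lemma Yb_self (l n : ℤ) : Yb ξ l n l = n := by
  simp [Yb, Ybwd]

lemma Yb_sub_one {l i : ℤ} (n : ℤ) (h : i ≤ l) :
    Yb ξ l n (i - 1) = Yb ξ l n i - ξ (i - 1, Yb ξ l n i) := by
  have hsucc : (l - (i - 1)).toNat = (l - i).toNat + 1 := by omega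
  have htime : l - ((l - i).toNat : ℤ) - 1 = i - 1 := by omega
  simp only [Yb, hsucc, Ybwd, htime]

lemma odd_Yb_add (hξ : ∀ z, ξ z = 1 ∨ ξ z = -1) {l n : ℤ} (hn : Odd (n + l)) :
    ∀ i ≤ l, Odd (Yb ξ l n i + i) := by
  intro i hi
  induction i, hi using Int.leInductionDown with
  | base => rwa [Yb_self]
  | pred i hi ih =>
    rw [Yb_sub_one n hi, Int.odd_iff]
    rw [Int.odd_iff] at ih
    rcases hξ (i - 1, Yb ξ l n i) with h | h <;> rw [h] <;> omega

lemma monotoneOn_sub_xi (hξ : ∀ z, ξ z = 1 ∨ ξ z = -1) (p c : ℤ) :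
    MonotoneOn (fun y => y - ξ (p, y)) {y | Odd (y + c)} := by
  intro y' hy' y hy (hle : y' ≤ y)
  rcases hle.eq_or_lt with rfl | hlt
  · rfl
  simp only [mem_ofPred_eq, Int.odd_iff] at hy hy'
  show y' - ξ (p, y') ≤ y - ξ (p, y)
  rcases hξ (p, y) with h | h <;> rcases hξ (p, y') with h' | h' <;> simp only [h, h'] <;> omega

lemma sSup_image_Yb_sub_one (hξ : ∀ z, ξ z = 1 ∨ ξ z = -1) {g : ℤ → ℤ} {i j : ℤ}
    (hg : ∀ l ≤ j, Odd (g l + 1 + l)) (hi : i ≤ j) :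
    sSup ((fun l => Yb ξ l (g l + 1) (i - 1)) '' Icc (i - 1) j) =
      max (g (i - 1) + 1) (sSup ((fun l => Yb ξ l (g l + 1) i) '' Icc i j) -
        ξ (i - 1, sSup ((fun l => Yb ξ l (g l + 1) i) '' Icc i j))) := by
  set S := (fun l => Yb ξ l (g l + 1) i) '' Icc i j
  have hfin : S.Finite := (finite_Icc i j).image _
  have hne : S.Nonempty := (nonempty_Icc.2 hi).image _
  have hodd : S ⊆ {y | Odd (y + i)} := by
    rintro _ ⟨l, hl, rfl⟩
    exact odd_Yb_add hξ (hg l hl.2) i hl.1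
  have hstep : (fun l => Yb ξ l (g l + 1) (i - 1)) '' Icc i j = (fun y => y - ξ (i - 1, y)) '' S := by
    rw [image_image]
    exact image_congr fun l hl => Yb_sub_one _ hl.1
  have htop : IsGreatest ((fun y => y - ξ (i - 1, y)) '' S) (sSup S - ξ (i - 1, sSup S)) :=
    ((monotoneOn_sub_xi hξ (i - 1) i).mono hodd).map_isGreatest
      ⟨hne.csSup_mem hfin, fun _ hy => le_csSup hfin.bddAbove hy⟩
  rw [image_Icc_sub_one_left _ hi, Yb_self, hstep, csSup_insert htop.bddAbove ⟨_, htop.1⟩,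
    htop.csSup_eq]

end BackwardWeb

section UpperBoundary

variable {ξ : ℤ × ℤ → ℤ} {j v : ℤ}

def rUpNext (ξ : ℤ × ℤ → ℤ) (j v : ℤ) (k : ℕ) (l : ℤ) : ℤ :=
  if l = j then v else rUp ξ j v k (l + 1)

lemma rUp_succ_eq_sSup (k : ℕ) (i : ℤ) :
    rUp ξ j v (k + 1) i = sSup ((fun l => Yb ξ l (rUpNext ξ j v k l + 1) i) '' Icc i j) := by
  rw [rUp, ← setOf_exists_Icc_eq_image]
  rfl

lemma rUp_succ_self (k : ℕ) : rUp ξ j v (k + 1) j = v + 1 := by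
  simp [rUp_succ_eq_sSup, Yb_self, rUpNext]

lemma odd_rUpNext_add (hv : Even (j + v)) {k : ℕ} (hk : ∀ i ≤ j, Odd (rUp ξ j v k i + i)) :
    ∀ l ≤ j, Odd (rUpNext ξ j v k l + 1 + l) := by
  intro l hl
  unfold rUpNext
  split_ifs with hlj
  · subst hlj
    obtain ⟨t, ht⟩ := hv
    exact ⟨t, by omega⟩
  · obtain ⟨t, ht⟩ := hk (l + 1) (by omega)
    exact ⟨t, by omega⟩

lemma odd_rUp_add (hξ : ∀ z, ξ z = 1 ∨ ξ z = -1) (hv : Even (j + v)) :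
    ∀ k : ℕ, ∀ i ≤ j, Odd (rUp ξ j v k i + i)
  | 0 => odd_Yb_add hξ (by obtain ⟨t, ht⟩ := hv; exact ⟨t, by omega⟩)
  | k + 1 => by
    intro i hi
    have hmem := ((nonempty_Icc.2 hi).image _).csSup_mem ((finite_Icc i j).image
      (fun l => Yb ξ l (rUpNext ξ j v k l + 1) i))
    rw [rUp_succ_eq_sSup]
    obtain ⟨l, hl, hl_eq⟩ := hmem
    rw [← hl_eq]
    exact odd_Yb_add hξ (odd_rUpNext_add hv (odd_rUp_add hξ hv k) l hl.2) i hl.1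

lemma rUp_succ_sub_one (hξ : ∀ z, ξ z = 1 ∨ ξ z = -1) (hv : Even (j + v)) (k : ℕ) {i : ℤ}
    (hi : i ≤ j) :
    rUp ξ j v (k + 1) (i - 1) = max (rUpNext ξ j v k (i - 1) + 1)
      (rUp ξ j v (k + 1) i - ξ (i - 1, rUp ξ j v (k + 1) i)) := by
  simp only [rUp_succ_eq_sSup]
  exact sSup_image_Yb_sub_one hξ (odd_rUpNext_add hv (odd_rUp_add hξ hv k)) hi

end UpperBoundary

theorem rUp_skorokhod_representation_general (ξ : ℤ × ℤ → ℤ)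
    (hξ : ∀ z, ξ z = 1 ∨ ξ z = -1) (j u v : ℤ)
    (hv : Even (j + v)) (k : ℕ) :
    ∃ s : ℤ → ℤ, (∀ i ≤ j, s (i - 1) - s i = 1 ∨ s (i - 1) - s i = -1) ∧
      ∀ i : ℤ, Tmeet ξ j u v k ≤ i → i ≤ j →
        rUp ξ j v (k + 1) i =
          s i - sInf {x : ℤ | ∃ l : ℤ, i ≤ l ∧ l ≤ j ∧
            x = s l - (if l = j then v else rUp ξ j v k (l + 1)) - 1} := by
  let s i := v + 1 - ∑ l ∈ Finset.Ico i j, ξ (l, rUp ξ j v (k + 1) (l + 1))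
  have hs : ∀ i ≤ j, s (i - 1) = s i - ξ (i - 1, rUp ξ j v (k + 1) i) := by
    intro i hi
    simp only [s, ← Finset.insert_Ico_left_eq_Ico_sub_one hi,
      Finset.sum_insert (by simp : i - 1 ∉ Finset.Ico i j), sub_add_cancel]
    ring
  refine ⟨s, fun i hi => ?_, fun i _ hi => ?_⟩
  · rw [hs i hi]
    rcases hξ (i - 1, rUp ξ j v (k + 1) i) with h | h <;> simp [h]
  · rw [eq_sub_sInf_of_reflected (R := rUp ξ j v (k + 1))
      (b := fun l => rUpNext ξ j v k l + 1) ((rUp_succ_self k).trans (by simp [rUpNext]))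
      (fun i hi => rUp_succ_sub_one hξ hv k hi) (by simp [s, rUpNext]) hs i hi,
      setOf_exists_Icc_eq_image]
    simp only [rUpNext, sub_sub]

/-- for every sign configuration `ξ`, target time `j` and interval
`[u,v]` with `(j,u),(j,v) ∈ ℤ²ₑ`, and every `k ≥ 0`, there is a backward random
walk `s` (with `±1` backward increments) such that the discrete Skorokhod
reflection representation
`r_{k+1}^+(i) = s(i) - min_{l ∈ {i,…,j}} ( s(l) - r_k^+(l+1) - 1 )`
holds for all `T_k ≤ i ≤ j`, with the convention `r_k^+(j+1) = v`. -/
theorem rUp_skorokhod_representation (ξ : ℤ × ℤ → ℤ)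
    (hξ : ∀ z, ξ z = 1 ∨ ξ z = -1) (j u v : ℤ) (huv : u ≤ v)
    (hu : Even (j + u)) (hv : Even (j + v)) (k : ℕ) :
    ∃ s : ℤ → ℤ, (∀ i ≤ j, s (i - 1) - s i = 1 ∨ s (i - 1) - s i = -1) ∧
      ∀ i : ℤ, Tmeet ξ j u v k ≤ i → i ≤ j →
        rUp ξ j v (k + 1) i =
          s i - sInf {x : ℤ | ∃ l : ℤ, i ≤ l ∧ l ≤ j ∧
            x = s l - (if l = j then v else rUp ξ j v k (l + 1)) - 1} :=
  rUp_skorokhod_representation_general ξ hξ j u v hv k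

end
end

section
/- Let the sign field ξ = (ξ_z)_{z∈ℤ²_e} be i.i.d. uniform on {−1,+1}. Fix j ∈ ℤ and v ∈ ℤ with (j,v) ∈ ℤ²_e, and define the backward boundary paths r_k^+ for the target half-line {j}×(−∞,v] as in the context. Let T(m,n) be the last passage time in the Seppäläinen–Johansson model with parameter 1/2. Then for every k ≥ 0 and every i ≤ j − k, the random variable r_k^+(i) has the same distribution as 2·T(j−k−i, k) + v + 2k + i − j + 1. -/
open MeasureTheory ProbabilityTheory

noncomputable section

/-- The last passage time `T(m,n)` in the Seppäläinen–Johansson model with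
horizontal edge weights `w`: the maximal total weight of horizontal edges along
up-right lattice paths from `(0,0)` to `(m,n)`, encoded by the nondecreasing
sequence `h` of heights of the `m` horizontal steps. -/
def TSJ (w : ℕ × ℕ → ℤ) (m n : ℕ) : ℤ :=
  sSup {x : ℤ | ∃ h : ℕ → ℕ, Monotone h ∧ (∀ a, h a ≤ n) ∧
    x = ∑ a ∈ Finset.range m, w (a, h a)}

namespace SJ

/-- sign fields -/
def PM (ξ : ℤ × ℤ → ℤ) : Prop := ∀ z, ξ z = 1 ∨ ξ z = -1

variable {ξ : ℤ × ℤ → ℤ} {j v : ℤ}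

lemma Yb_self (l n : ℤ) : Yb ξ l n l = n := by
  simp [Yb, Ybwd]

lemma Yb_step {i l : ℤ} (h : i < l) (n : ℤ) :
    Yb ξ l n i = Yb ξ l n (i + 1) - ξ (i, Yb ξ l n (i + 1)) := by
  have h1 : (l - i).toNat = (l - (i + 1)).toNat + 1 := by omega
  have h2 : l - ((l - (i + 1)).toNat : ℤ) - 1 = i := by omega
  simp only [Yb, h1, Ybwd, h2]

lemma Ybwd_pm (hξ : PM ξ) (i n : ℤ) (m : ℕ) :
    n - m ≤ Ybwd ξ i n m ∧ Ybwd ξ i n m ≤ n + m ∧ (Ybwd ξ i n m + n + m) % 2 = 0 := by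
  induction m with
  | zero => refine ⟨by simp [Ybwd], by simp [Ybwd], by simp [Ybwd]; omega⟩
  | succ m ih =>
    rcases hξ (i - m - 1, Ybwd ξ i n m) with h | h <;>
    · simp only [Ybwd, h]
      push_cast
      omega

lemma Yb_pm (hξ : PM ξ) {i l : ℤ} (hil : i ≤ l) (n : ℤ) :
    n - (l - i) ≤ Yb ξ l n i ∧ Yb ξ l n i ≤ n + (l - i) ∧ (Yb ξ l n i + n + (l - i)) % 2 = 0 := by
  have h := Ybwd_pm hξ l n (l - i).toNat
  have : ((l - i).toNat : ℤ) = l - i := by omega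
  rw [this] at h
  exact h

/-- start height used by `rUp (k+1)` at location `l`. -/
def start (ξ : ℤ × ℤ → ℤ) (j v : ℤ) (k : ℕ) (l : ℤ) : ℤ :=
  (if l = j then v else rUp ξ j v k (l + 1)) + 1

lemma rUp_succ_eq_sup' (k : ℕ) {i : ℤ} (hij : i ≤ j) :
    rUp ξ j v (k + 1) i = (Finset.Icc i j).sup' (Finset.nonempty_Icc.2 hij)
      (fun l => Yb ξ l (start ξ j v k l) i) := by
  rw [Finset.sup'_eq_csSup_image]
  show sSup _ = sSup _
  congr 1
  ext x
  constructor
  · rintro ⟨l, h1, h2, h3⟩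
    exact ⟨l, by simp [Finset.mem_Icc, h1, h2], h3.symm⟩
  · rintro ⟨l, hl, h3⟩
    simp only [Finset.coe_Icc, Set.mem_Icc] at hl
    exact ⟨l, hl.1, hl.2, h3.symm⟩

lemma rUp_j (k : ℕ) : rUp ξ j v k j = v + 1 := by
  cases k with
  | zero => simp [rUp, Yb_self]
  | succ k =>
    rw [rUp_succ_eq_sup' k le_rfl]
    apply le_antisymm
    · apply Finset.sup'_le
      intro l hl
      simp only [Finset.mem_Icc] at hl
      have : l = j := le_antisymm hl.2 hl.1
      subst this
      simp [start, Yb_self]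
    · have := Finset.le_sup' (fun l => Yb ξ l (SJ.start ξ j v k l) j)
        (Finset.mem_Icc.2 ⟨le_refl j, le_refl j⟩)
      simpa [start, Yb_self] using this


lemma start_pm (hξ : PM ξ)
    (IH : ∀ i' : ℤ, i' ≤ j → v + 1 - (j - i') ≤ rUp ξ j v k i' ∧
      rUp ξ j v k i' ≤ v + 1 + (j - i') ∧ (rUp ξ j v k i' + v + 1 + (j - i')) % 2 = 0)
    {l : ℤ} (hl : l ≤ j) :
    v + 1 - (j - l) ≤ start ξ j v k l ∧ start ξ j v k l ≤ v + 2 + (j - l) ∧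
      (start ξ j v k l + v + (j - l)) % 2 = 1 := by
  rcases eq_or_lt_of_le hl with rfl | hlt
  · simp [start]; omega
  · have hl1 : l + 1 ≤ j := hlt
    have h := IH (l + 1) hl1
    have hne : l ≠ j := ne_of_lt hlt
    simp only [start, if_neg hne]
    omega

/-- Bounds and parity for every candidate value `Yb ξ l (start l) i`. -/
lemma cand_pm (hξ : PM ξ)
    (IH : ∀ i' : ℤ, i' ≤ j → v + 1 - (j - i') ≤ rUp ξ j v k i' ∧
      rUp ξ j v k i' ≤ v + 1 + (j - i') ∧ (rUp ξ j v k i' + v + 1 + (j - i')) % 2 = 0)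
    {i l : ℤ} (hil : i ≤ l) (hl : l ≤ j) :
    v + 1 - (j - i) ≤ Yb ξ l (start ξ j v k l) i ∧
      Yb ξ l (start ξ j v k l) i ≤ v + 2 + (j - i) ∧
      (Yb ξ l (start ξ j v k l) i + v + 1 + (j - i)) % 2 = 0 := by
  have hs := start_pm hξ IH hl
  have hy := Yb_pm hξ hil (start ξ j v k l)
  omega

lemma rUp_pm (hξ : PM ξ) (k : ℕ) : ∀ i : ℤ, i ≤ j →
    v + 1 - (j - i) ≤ rUp ξ j v k i ∧ rUp ξ j v k i ≤ v + 1 + (j - i) ∧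
      (rUp ξ j v k i + v + 1 + (j - i)) % 2 = 0 := by
  induction k with
  | zero =>
    intro i hij
    have h := Yb_pm hξ hij (v + 1)
    have he : rUp ξ j v 0 i = Yb ξ j (v + 1) i := rfl
    rw [he]
    omega
  | succ k IH =>
    intro i hij
    rw [rUp_succ_eq_sup' k hij]
    obtain ⟨l, hl, heq⟩ := Finset.exists_mem_eq_sup' (Finset.nonempty_Icc.2 hij)
      (fun l => Yb ξ l (start ξ j v k l) i)
    rw [heq]
    simp only [Finset.mem_Icc] at hl
    have h := cand_pm hξ IH hl.1 hl.2
    -- upper bound: v+2+(j-i) vs claimed v+1+(j-i): parity fixes it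
    omega

lemma step_mono (hξ : PM ξ) {x y : ℤ} (hpar : (x - y) % 2 = 0) (hxy : y ≤ x) (c : ℤ) :
    y - ξ (c, y) ≤ x - ξ (c, x) := by
  rcases eq_or_lt_of_le hxy with rfl | h
  · exact le_refl _
  · have : y + 2 ≤ x := by omega
    rcases hξ (c, x) with h1 | h1 <;> rcases hξ (c, y) with h2 | h2 <;> omega

lemma rUp_rec (hξ : PM ξ) (k : ℕ) {i : ℤ} (hij : i < j) :
    rUp ξ j v (k + 1) i =
      max (rUp ξ j v (k + 1) (i + 1) - ξ (i, rUp ξ j v (k + 1) (i + 1)))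
        (rUp ξ j v k (i + 1) + 1) := by
  have hij' : i ≤ j := le_of_lt hij
  have hi1 : i + 1 ≤ j := hij
  have hne : (Finset.Icc (i + 1) j).Nonempty := Finset.nonempty_Icc.2 hi1
  have hins : Finset.Icc i j = insert i (Finset.Icc (i + 1) j) := by
    ext x; simp only [Finset.mem_Icc, Finset.mem_insert]; omega
  rw [rUp_succ_eq_sup' k hij']
  rw [Finset.sup'_congr (Finset.nonempty_Icc.2 hij') hins
    (fun x _ => rfl (a := Yb ξ x (start ξ j v k x) i))]
  rw [Finset.sup'_insert (H := hne)]
  have hfi : Yb ξ i (start ξ j v k i) i = rUp ξ j v k (i + 1) + 1 := by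
    rw [Yb_self, start, if_neg (ne_of_lt hij)]
  -- rewrite candidates at time i as step of candidates at time i+1
  have hstep : ∀ l ∈ Finset.Icc (i + 1) j,
      Yb ξ l (start ξ j v k l) i
        = Yb ξ l (start ξ j v k l) (i + 1) - ξ (i, Yb ξ l (start ξ j v k l) (i + 1)) := by
    intro l hl
    simp only [Finset.mem_Icc] at hl
    exact Yb_step (by omega) _
  have hpar : ∀ l ∈ Finset.Icc (i + 1) j,
      (Yb ξ l (start ξ j v k l) (i + 1) + v + 1 + (j - (i + 1))) % 2 = 0 := by
    intro l hl
    simp only [Finset.mem_Icc] at hl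
    exact (cand_pm hξ (fun i' hi' => rUp_pm hξ k i' hi') hl.1 hl.2).2.2
  obtain ⟨l₀, hl₀, hmax⟩ := Finset.exists_mem_eq_sup' hne
    (fun l => Yb ξ l (start ξ j v k l) (i + 1))
  have hsup1 : rUp ξ j v (k + 1) (i + 1)
      = (Finset.Icc (i + 1) j).sup' hne (fun l => Yb ξ l (start ξ j v k l) (i + 1)) :=
    rUp_succ_eq_sup' k hi1
  have hkey : (Finset.Icc (i + 1) j).sup' hne (fun l => Yb ξ l (start ξ j v k l) i)
      = rUp ξ j v (k + 1) (i + 1) - ξ (i, rUp ξ j v (k + 1) (i + 1)) := by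
    rw [hsup1, hmax]
    apply le_antisymm
    · apply Finset.sup'_le
      intro l hl
      rw [hstep l hl]
      apply step_mono hξ
      · have h1 := hpar l hl; have h2 := hpar l₀ hl₀; omega
      · rw [← hmax]
        exact Finset.le_sup' (fun l => Yb ξ l (start ξ j v k l) (i + 1)) hl
    · rw [← hstep l₀ hl₀]
      exact Finset.le_sup' (fun l => Yb ξ l (start ξ j v k l) i) hl₀
  rw [hkey, hfi]
  rw [max_comm]


lemma rUp0_rec {i : ℤ} (hij : i < j) :
    rUp ξ j v 0 i = rUp ξ j v 0 (i + 1) - ξ (i, rUp ξ j v 0 (i + 1)) :=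
  Yb_step hij (v + 1)

lemma rUp_wedge (hξ : PM ξ) : ∀ t : ℕ, ∀ (k : ℕ) (i : ℤ), j - i = (t : ℤ) →
    (j : ℤ) - k ≤ i → rUp ξ j v k i = v + 1 + (j - i) := by
  intro t
  induction t with
  | zero =>
    intro k i ht _
    have : i = j := by omega
    subst this
    rw [rUp_j]; omega
  | succ t IH =>
    intro k i ht hk
    have hij : i < j := by omega
    cases k with
    | zero => omega
    | succ k' =>
      rw [rUp_rec hξ k' hij]
      have h1 : rUp ξ j v (k' + 1) (i + 1) = v + 1 + (j - (i + 1)) := by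
        apply IH <;> push_cast <;> omega
      have h2 : rUp ξ j v k' (i + 1) = v + 1 + (j - (i + 1)) := by
        apply IH <;> push_cast <;> omega
      rw [h1, h2]
      rcases hξ (i, v + 1 + (j - (i + 1))) with h | h <;> rw [h] <;> omega

lemma rUp_mono_aux (hξ : PM ξ) : ∀ t : ℕ, ∀ i : ℤ, j - i = (t : ℤ) →
    ∀ k : ℕ, rUp ξ j v k i ≤ rUp ξ j v (k + 1) i := by
  intro t
  induction t with
  | zero =>
    intro i ht k
    have : i = j := by omega
    subst this
    rw [rUp_j, rUp_j]
  | succ t IH =>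
    intro i ht k
    have hij : i < j := by omega
    have IHmono : ∀ k' : ℕ, rUp ξ j v k' (i + 1) ≤ rUp ξ j v (k' + 1) (i + 1) := by
      intro k'; apply IH; push_cast; omega
    have lip_ub : ∀ k' : ℕ, rUp ξ j v k' i ≤ rUp ξ j v k' (i + 1) + 1 := by
      intro k'
      cases k' with
      | zero =>
        rw [rUp0_rec hij]
        rcases hξ (i, rUp ξ j v 0 (i + 1)) with h | h <;> rw [h] <;> omega
      | succ k'' =>
        rw [rUp_rec hξ k'' hij]
        apply max_le
        · rcases hξ (i, rUp ξ j v (k'' + 1) (i + 1)) with h | h <;> rw [h] <;> omega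
        · have := IHmono k''; omega
    rw [rUp_rec hξ k hij]
    calc rUp ξ j v k i ≤ rUp ξ j v k (i + 1) + 1 := lip_ub k
    _ ≤ _ := le_max_right _ _

lemma rUp_mono_k (hξ : PM ξ) {i : ℤ} (hij : i ≤ j) (k : ℕ) :
    rUp ξ j v k i ≤ rUp ξ j v (k + 1) i := by
  exact rUp_mono_aux hξ (j - i).toNat i (by omega) k

lemma rUp_mono_le (hξ : PM ξ) {i : ℤ} (hij : i ≤ j) {a b : ℕ} (hab : a ≤ b) :
    rUp ξ j v a i ≤ rUp ξ j v b i := by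
  induction b with
  | zero => have : a = 0 := by omega
            subst this; exact le_refl _
  | succ b IH =>
    rcases Nat.lt_or_ge a (b + 1) with h | h
    · exact le_trans (IH (by omega)) (rUp_mono_k hξ hij b)
    · have : a = b + 1 := by omega
      subst this; exact le_refl _

lemma rUp_lip_ub (hξ : PM ξ) {i : ℤ} (hij : i < j) (k : ℕ) :
    rUp ξ j v k i ≤ rUp ξ j v k (i + 1) + 1 := by
  cases k with
  | zero =>
    rw [rUp0_rec hij]
    rcases hξ (i, rUp ξ j v 0 (i + 1)) with h | h <;> rw [h] <;> omega
  | succ k'' =>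
    rw [rUp_rec hξ k'' hij]
    apply max_le
    · rcases hξ (i, rUp ξ j v (k'' + 1) (i + 1)) with h | h <;> rw [h] <;> omega
    · have := rUp_mono_k (v := v) hξ (show i + 1 ≤ j by omega) k''; omega

lemma rUp_local (hξ : PM ξ) {ξ' : ℤ × ℤ → ℤ} (hξ' : PM ξ') {i₀ : ℤ}
    (hjv : (j + v) % 2 = 0)
    (hag : ∀ c h : ℤ, i₀ ≤ c → c < j → v + 1 - (j - c - 1) ≤ h → h ≤ v + 1 + (j - c - 1) →
      (c + h) % 2 = 0 → ξ (c, h) = ξ' (c, h)) :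
    ∀ t : ℕ, ∀ i : ℤ, j - i = (t : ℤ) → i₀ ≤ i → ∀ k : ℕ,
      rUp ξ j v k i = rUp ξ' j v k i := by
  intro t
  induction t with
  | zero =>
    intro i ht _ k
    have : i = j := by omega
    subst this
    rw [rUp_j, rUp_j]
  | succ t IH =>
    intro i ht hi₀ k
    have hij : i < j := by omega
    have IH' : ∀ k' : ℕ, rUp ξ j v k' (i + 1) = rUp ξ' j v k' (i + 1) := by
      intro k'; exact IH (i + 1) (by push_cast; omega) (by omega) k'
    cases k with
    | zero =>
      rw [rUp0_rec hij, rUp0_rec (ξ := ξ') hij, IH' 0]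
      have hb := rUp_pm (j := j) (v := v) hξ' 0 (i + 1) (by omega)
      rw [hag i (rUp ξ' j v 0 (i + 1)) hi₀ hij (by omega) (by omega) (by omega)]
    | succ k' =>
      rw [rUp_rec hξ k' hij, rUp_rec hξ' k' hij, IH' (k' + 1), IH' k']
      have hb := rUp_pm (j := j) (v := v) hξ' (k' + 1) (i + 1) (by omega)
      rw [hag i (rUp ξ' j v (k' + 1) (i + 1)) hi₀ hij (by omega) (by omega) (by omega)]


section TSJlemmas

variable {w w' : ℕ × ℕ → ℤ} {m n : ℕ}

def SJset (w : ℕ × ℕ → ℤ) (m n : ℕ) : Set ℤ :=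
  {x : ℤ | ∃ h : ℕ → ℕ, Monotone h ∧ (∀ a, h a ≤ n) ∧
    x = ∑ a ∈ Finset.range m, w (a, h a)}

lemma TSJ_def (w : ℕ × ℕ → ℤ) (m n : ℕ) : TSJ w m n = sSup (SJset w m n) := rfl

lemma SJset_nonempty : (SJset w m n).Nonempty :=
  ⟨_, fun _ => 0, monotone_const, fun _ => Nat.zero_le n, rfl⟩

lemma SJset_bdd : BddAbove (SJset w m n) := by
  refine ⟨∑ a ∈ Finset.range m, (Finset.range (n + 1)).sup' ⟨0, by simp⟩ (fun b => w (a, b)), ?_⟩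
  rintro x ⟨h, hm, hle, rfl⟩
  apply Finset.sum_le_sum
  intro a _
  exact Finset.le_sup' (fun b => w (a, b)) (Finset.mem_range.2 (by have := hle a; omega))

lemma le_TSJ {x : ℤ} (hx : x ∈ SJset w m n) : x ≤ TSJ w m n := le_csSup SJset_bdd hx

lemma TSJ_le {B : ℤ} (hb : ∀ x ∈ SJset w m n, x ≤ B) : TSJ w m n ≤ B :=
  csSup_le SJset_nonempty hb

lemma TSJ_zero : TSJ w 0 n = 0 := by
  apply le_antisymm
  · apply TSJ_le; rintro x ⟨h, hm, hle, rfl⟩; simp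
  · apply le_TSJ; exact ⟨fun _ => 0, monotone_const, fun _ => Nat.zero_le n, by simp⟩

lemma TSJ_row0 : TSJ w m 0 = ∑ a ∈ Finset.range m, w (a, 0) := by
  apply le_antisymm
  · apply TSJ_le
    rintro x ⟨h, hm, hle, rfl⟩
    apply le_of_eq
    apply Finset.sum_congr rfl
    intro a _
    have : h a = 0 := Nat.le_zero.1 (hle a)
    rw [this]
  · apply le_TSJ; exact ⟨fun _ => 0, monotone_const, fun _ => le_refl 0, rfl⟩

lemma TSJ_mono_n : TSJ w m n ≤ TSJ w m (n + 1) := by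
  apply TSJ_le
  rintro x ⟨h, hm, hle, rfl⟩
  exact le_TSJ ⟨h, hm, fun a => by have := hle a; omega, rfl⟩

lemma TSJ_rec : TSJ w (m + 1) (n + 1)
    = max (TSJ w (m + 1) n) (TSJ w m (n + 1) + w (m, n + 1)) := by
  apply le_antisymm
  · apply TSJ_le
    rintro x ⟨h, hm, hle, rfl⟩
    rcases Nat.lt_or_ge (h m) (n + 1) with hc | hc
    · refine le_trans ?_ (le_max_left _ _)
      apply le_TSJ
      refine ⟨fun a => min (h a) n, hm.min monotone_const, fun a => min_le_right _ _, ?_⟩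
      apply Finset.sum_congr rfl
      intro a ha
      have ha' : a ≤ m := by simp only [Finset.mem_range] at ha; omega
      have : h a ≤ n := le_trans (hm ha') (by omega)
      show w (a, h a) = w (a, min (h a) n)
      rw [min_eq_left this]
    · have hc' : h m = n + 1 := le_antisymm (hle m) hc
      refine le_trans ?_ (le_max_right _ _)
      rw [Finset.sum_range_succ, hc']
      have : (∑ a ∈ Finset.range m, w (a, h a)) ≤ TSJ w m (n + 1) :=
        le_TSJ ⟨h, hm, hle, rfl⟩
      omega
  · apply max_le
    · exact TSJ_mono_n
    · have key : TSJ w m (n + 1) ≤ TSJ w (m + 1) (n + 1) - w (m, n + 1) := by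
        apply TSJ_le
        rintro x ⟨h, hm, hle, rfl⟩
        have hx : (∑ a ∈ Finset.range m, w (a, h a)) + w (m, n + 1) ≤ TSJ w (m + 1) (n + 1) := by
          apply le_TSJ
          refine ⟨fun a => if a < m then h a else n + 1, ?_, ?_, ?_⟩
          · intro a b hab
            by_cases h1 : a < m <;> by_cases h2 : b < m <;> simp only [if_pos, if_neg, h1, h2, if_true, if_false]
            · exact hm hab
            · exact hle a
            · omega
            · exact le_refl _
          · intro a; by_cases h1 : a < m <;> simp [h1]; exact hle a
          · rw [Finset.sum_range_succ]
            simp only [lt_irrefl, if_neg]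
            congr 1
            apply Finset.sum_congr rfl
            intro a ha
            simp only [Finset.mem_range] at ha
            simp [ha]
        omega
      omega

lemma TSJ_le_card (hw : ∀ e, w e = 0 ∨ w e = 1) : TSJ w m n ≤ (m : ℤ) := by
  apply TSJ_le
  rintro x ⟨h, hm, hle, rfl⟩
  calc (∑ a ∈ Finset.range m, w (a, h a)) ≤ ∑ a ∈ Finset.range m, 1 := by
        apply Finset.sum_le_sum
        intro a _
        rcases hw (a, h a) with h1 | h1 <;> omega
  _ = (m : ℤ) := by simp

lemma TSJ_lip (hw : ∀ e, w e = 0 ∨ w e = 1) : TSJ w (m + 1) n ≤ TSJ w m n + 1 := by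
  apply TSJ_le
  rintro x ⟨h, hm, hle, rfl⟩
  rw [Finset.sum_range_succ]
  have h1 : (∑ a ∈ Finset.range m, w (a, h a)) ≤ TSJ w m n := le_TSJ ⟨h, hm, hle, rfl⟩
  rcases hw (m, h m) with h2 | h2 <;> omega

lemma TSJ_local (hag : ∀ a b : ℕ, a < m → b ≤ n → w (a, b) = w' (a, b)) :
    TSJ w m n = TSJ w' m n := by
  have : SJset w m n = SJset w' m n := by
    ext x
    constructor <;> rintro ⟨h, hm, hle, rfl⟩ <;> refine ⟨h, hm, hle, ?_⟩ <;>
      apply Finset.sum_congr rfl <;> intro a ha <;>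
      simp only [Finset.mem_range] at ha
    · exact hag a (h a) ha (hle a)
    · exact (hag a (h a) ha (hle a)).symm
  rw [TSJ_def, TSJ_def, this]

end TSJlemmas


section XVpart

variable {w : ℕ × ℕ → ℤ} {k : ℕ}

/-- previous component, with a phantom value `y 0 - 2` below index `0`. -/
def prevv {k : ℕ} (y : Fin (k + 1) → ℤ) (n : Fin (k + 1)) : ℤ :=
  if (n : ℕ) = 0 then y n - 2 else y ⟨(n : ℕ) - 1, by have := n.isLt; omega⟩

def FXt {k : ℕ} (y b : Fin (k + 1) → ℤ) (n : Fin (k + 1)) : ℤ :=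
  max (y n + 2 * b n - 1) (prevv y n + 1)

def FRt {k : ℕ} (y : Fin (k + 1) → ℤ) (u : ℤ → ℤ) (n : Fin (k + 1)) : ℤ :=
  max (y n - u (y n)) (prevv y n + 1)

def bitOf (x : ℤ) : ℤ := if x = -1 then 1 else 0

def Gfun {k : ℕ} (y g : Fin (k + 1) → ℤ) (n : Fin (k + 1)) : ℤ :=
  if prevv y n < y n then max (y n + 2 * g n - 1) (prevv y n + 1) else prevv y n + 1

def cRt {k : ℕ} (y : Fin (k + 1) → ℤ) (u : ℤ → ℤ) (n : Fin (k + 1)) : ℤ :=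
  if prevv y n < y n then bitOf (u (y n)) else 0

def cXt {k : ℕ} (y b : Fin (k + 1) → ℤ) (n : Fin (k + 1)) : ℤ :=
  if prevv y n < y n then b n else 0

lemma FRt_eq_G {y : Fin (k + 1) → ℤ} {u : ℤ → ℤ} (hu : ∀ x, u x = 1 ∨ u x = -1) :
    FRt y u = Gfun y (cRt y u) := by
  funext n
  unfold FRt Gfun cRt
  by_cases ha : prevv y n < y n
  · rw [if_pos ha, if_pos ha]
    rcases hu (y n) with h | h <;> rw [h] <;>
      simp only [bitOf, if_pos, if_neg, show ((1:ℤ) = -1) = False by simp, show ((-1:ℤ) = -1) = True by simp,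
        if_true, if_false] <;>
      [(have e : y n + 2 * 0 - 1 = y n - 1 := by ring);
       (have e : y n + 2 * 1 - 1 = y n - -1 := by ring)] <;> rw [e]
  · rw [if_neg ha]
    apply max_eq_right
    rcases hu (y n) with h | h <;> rw [h] <;> omega

lemma FXt_eq_G {y b : Fin (k + 1) → ℤ} (hb : ∀ n, b n = 0 ∨ b n = 1) :
    FXt y b = Gfun y (cXt y b) := by
  funext n
  unfold FXt Gfun cXt
  by_cases ha : prevv y n < y n
  · rw [if_pos ha, if_pos ha]
  · rw [if_neg ha]
    apply max_eq_right
    rcases hb n with h | h <;> rw [h] <;> omega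

/-- The SJ-side process (as a function of the column `c`). -/
def XV (w : ℕ × ℕ → ℤ) (j v : ℤ) (k : ℕ) (c : ℤ) (n : Fin (k + 1)) : ℤ :=
  if j - (n : ℕ) ≤ c then v + 1 + (j - c)
  else 2 * TSJ w (j - (n : ℕ) - c).toNat (n : ℕ) + v + 2 * (n : ℕ) + c - j + 1

variable {j v : ℤ}

lemma XV_formula {c : ℤ} {n : Fin (k + 1)} (h : c ≤ j - (n : ℕ)) :
    XV w j v k c n = 2 * TSJ w (j - (n : ℕ) - c).toNat (n : ℕ) + v + 2 * (n : ℕ) + c - j + 1 := by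
  unfold XV
  by_cases hb : j - (n : ℕ) ≤ c
  · rw [if_pos hb]
    have h0 : (j - (n : ℕ) - c).toNat = 0 := by omega
    rw [h0, TSJ_zero]
    omega
  · rw [if_neg hb]

lemma XV_j (n : Fin (k + 1)) : XV w j v k j n = v + 1 := by
  unfold XV
  rw [if_pos (by omega)]
  omega

/-- the column bits used by the SJ-side step from column `c+1` to column `c`. -/
def xbits (w : ℕ × ℕ → ℤ) (j c : ℤ) (k : ℕ) (n : Fin (k + 1)) : ℤ :=
  if ((n : ℕ) : ℤ) ≤ j - c - 1 then w ((j - (n : ℕ) - c - 1).toNat, (n : ℕ)) else 0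

lemma XV_step (hw : ∀ e, w e = 0 ∨ w e = 1) {c : ℤ} (hc : c < j) :
    XV w j v k c = FXt (XV w j v k (c + 1)) (xbits w j c k) := by
  funext n
  obtain ⟨nv, hlt⟩ := n
  unfold FXt
  cases nv with
  | zero =>
    have hval : (((⟨0, hlt⟩ : Fin (k + 1)) : ℕ) : ℤ) ≤ j - c - 1 := by
      show ((0 : ℕ) : ℤ) ≤ j - c - 1
      push_cast; omega
    have hprev : prevv (XV w j v k (c + 1)) ⟨0, hlt⟩ = XV w j v k (c + 1) ⟨0, hlt⟩ - 2 := by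
      unfold prevv; rw [if_pos rfl]
    rw [hprev]
    unfold xbits
    rw [if_pos hval]
    have hb := hw ((j - ((⟨0, hlt⟩ : Fin (k + 1)) : ℕ) - c - 1).toNat, ((⟨0, hlt⟩ : Fin (k + 1)) : ℕ))
    rw [max_eq_left (by rcases hb with h | h <;> rw [h] <;> omega)]
    have e1 : XV w j v k c ⟨0, hlt⟩
        = 2 * TSJ w (j - (0 : ℕ) - c).toNat 0 + v + 2 * (0 : ℕ) + c - j + 1 :=
      XV_formula (by push_cast; omega)
    have e2 : XV w j v k (c + 1) ⟨0, hlt⟩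
        = 2 * TSJ w (j - (0 : ℕ) - (c + 1)).toNat 0 + v + 2 * (0 : ℕ) + (c + 1) - j + 1 :=
      XV_formula (by push_cast; omega)
    rw [e1, e2]
    have hM : (j - (0 : ℕ) - c).toNat = (j - (0 : ℕ) - (c + 1)).toNat + 1 := by omega
    rw [hM, TSJ_row0, Finset.sum_range_succ, ← TSJ_row0]
    have hco : ((j - ((⟨0, hlt⟩ : Fin (k + 1)) : ℕ) - c - 1).toNat, ((⟨0, hlt⟩ : Fin (k + 1)) : ℕ))
        = ((j - (0 : ℕ) - (c + 1)).toNat, (0 : ℕ)) := by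
      show ((j - (0:ℕ) - c - 1).toNat, (0:ℕ)) = _
      congr 1
      omega
    rw [hco]
    push_cast
    omega
  | succ n' =>
    have hlt' : n' < k + 1 := by omega
    have hprev : prevv (XV w j v k (c + 1)) ⟨n' + 1, hlt⟩ = XV w j v k (c + 1) ⟨n', hlt'⟩ := by
      unfold prevv
      rw [if_neg (by simp)]
      congr 1
    rw [hprev]
    unfold xbits
    by_cases hval : (((⟨n' + 1, hlt⟩ : Fin (k + 1)) : ℕ) : ℤ) ≤ j - c - 1
    · rw [if_pos hval]
      have hval' : ((n' + 1 : ℕ) : ℤ) ≤ j - c - 1 := hval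
      have e0 : XV w j v k c ⟨n' + 1, hlt⟩
          = 2 * TSJ w (j - (n' + 1 : ℕ) - c).toNat (n' + 1) + v + 2 * (n' + 1 : ℕ) + c - j + 1 :=
        XV_formula (by push_cast at hval' ⊢; omega)
      have e1 : XV w j v k (c + 1) ⟨n' + 1, hlt⟩
          = 2 * TSJ w (j - (n' + 1 : ℕ) - (c + 1)).toNat (n' + 1) + v + 2 * (n' + 1 : ℕ) + (c + 1) - j + 1 :=
        XV_formula (by push_cast at hval' ⊢; omega)
      have e2 : XV w j v k (c + 1) ⟨n', hlt'⟩
          = 2 * TSJ w (j - (n' : ℕ) - (c + 1)).toNat n' + v + 2 * (n' : ℕ) + (c + 1) - j + 1 :=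
        XV_formula (by push_cast at hval' ⊢; omega)
      rw [e0, e1, e2]
      have hM1 : (j - (n' + 1 : ℕ) - c).toNat = (j - (n' + 1 : ℕ) - (c + 1)).toNat + 1 := by
        push_cast at hval' ⊢; omega
      have hM2 : (j - (n' : ℕ) - (c + 1)).toNat = (j - (n' + 1 : ℕ) - (c + 1)).toNat + 1 := by
        push_cast at hval' ⊢; omega
      rw [hM1, hM2, TSJ_rec]
      have hco : ((j - ((⟨n' + 1, hlt⟩ : Fin (k + 1)) : ℕ) - c - 1).toNat,
            ((⟨n' + 1, hlt⟩ : Fin (k + 1)) : ℕ))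
          = ((j - (n' + 1 : ℕ) - (c + 1)).toNat, n' + 1) := by
        show ((j - (n' + 1 : ℕ) - c - 1).toNat, n' + 1) = _
        congr 1
        push_cast at hval' ⊢; omega
      rw [hco]
      set A := TSJ w ((j - (n' + 1 : ℕ) - (c + 1)).toNat + 1) n' with hA
      set B := TSJ w ((j - (n' + 1 : ℕ) - (c + 1)).toNat) (n' + 1) with hB
      set W := w ((j - (n' + 1 : ℕ) - (c + 1)).toNat, n' + 1) with hW
      rcases le_total A (B + W) with hAB | hAB
      · rw [max_eq_right hAB, max_eq_left (by push_cast; omega)]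
        push_cast; omega
      · rw [max_eq_left hAB, max_eq_right (by push_cast; omega)]
        push_cast; omega
    · rw [if_neg hval]
      have hval' : ¬ ((n' + 1 : ℕ) : ℤ) ≤ j - c - 1 := hval
      push_cast at hval'
      have e0 : XV w j v k c ⟨n' + 1, hlt⟩ = v + 1 + (j - c) := by
        unfold XV
        rw [if_pos (by show j - ((n' + 1 : ℕ) : ℤ) ≤ c; push_cast; omega)]
      have e1 : XV w j v k (c + 1) ⟨n' + 1, hlt⟩ = v + 1 + (j - (c + 1)) := by
        unfold XV
        rw [if_pos (by show j - ((n' + 1 : ℕ) : ℤ) ≤ c + 1; push_cast; omega)]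
      have e2 : XV w j v k (c + 1) ⟨n', hlt'⟩ = v + 1 + (j - (c + 1)) := by
        unfold XV
        rw [if_pos (by show j - ((n' : ℕ) : ℤ) ≤ c + 1; push_cast; omega)]
      rw [e0, e1, e2]
      rw [max_eq_right (by omega)]
      omega

end XVpart


section Rvecpart

variable {ξ : ℤ × ℤ → ℤ} {j v : ℤ} {k : ℕ}

/-- The R-side process vector at column `c`. -/
def Rvec (ξ : ℤ × ℤ → ℤ) (j v : ℤ) (k : ℕ) (c : ℤ) (n : Fin (k + 1)) : ℤ :=
  rUp ξ j v (n : ℕ) c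

lemma Rvec_j : Rvec ξ j v k j = fun _ => v + 1 := by
  funext n; exact rUp_j (n : ℕ)

lemma Rvec_step (hξ : PM ξ) {c : ℤ} (hc : c < j) :
    Rvec ξ j v k c = FRt (Rvec ξ j v k (c + 1)) (fun x => ξ (c, x)) := by
  funext n
  obtain ⟨nv, hlt⟩ := n
  unfold FRt Rvec
  cases nv with
  | zero =>
    have hprev : prevv (fun n : Fin (k + 1) => rUp ξ j v (n : ℕ) (c + 1)) ⟨0, hlt⟩
        = rUp ξ j v 0 (c + 1) - 2 := by
      unfold prevv; rw [if_pos rfl]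
    rw [hprev]
    show rUp ξ j v 0 c
      = max (rUp ξ j v 0 (c + 1) - ξ (c, rUp ξ j v 0 (c + 1))) (rUp ξ j v 0 (c + 1) - 2 + 1)
    rw [rUp0_rec hc]
    rw [max_eq_left (by rcases hξ (c, rUp ξ j v 0 (c + 1)) with h | h <;> rw [h] <;> omega)]
  | succ n' =>
    have hlt' : n' < k + 1 := by omega
    have hprev : prevv (fun n : Fin (k + 1) => rUp ξ j v (n : ℕ) (c + 1)) ⟨n' + 1, hlt⟩
        = rUp ξ j v n' (c + 1) := by
      unfold prevv
      rw [if_neg (by simp)]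
      rfl
    rw [hprev]
    show rUp ξ j v (n' + 1) c
      = max (rUp ξ j v (n' + 1) (c + 1) - ξ (c, rUp ξ j v (n' + 1) (c + 1)))
        (rUp ξ j v n' (c + 1) + 1)
    rw [rUp_rec hξ n' hc]

lemma Rvec_mono (hξ : PM ξ) {c : ℤ} (hc : c ≤ j) : Monotone (Rvec ξ j v k c) := by
  intro a b hab
  exact rUp_mono_le hξ hc hab

lemma Rvec_pm (hξ : PM ξ) {c : ℤ} (hc : c ≤ j) (n : Fin (k + 1)) :
    v + 1 - (j - c) ≤ Rvec ξ j v k c n ∧ Rvec ξ j v k c n ≤ v + 1 + (j - c) ∧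
      (Rvec ξ j v k c n + v + 1 + (j - c)) % 2 = 0 :=
  rUp_pm hξ (n : ℕ) c hc

lemma Rvec_wedge (hξ : PM ξ) {c : ℤ} (hc : c ≤ j) (n : Fin (k + 1))
    (hn : j - c ≤ ((n : ℕ) : ℤ)) : Rvec ξ j v k c n = v + 1 + (j - c) := by
  unfold Rvec
  exact rUp_wedge hξ (j - c).toNat (n : ℕ) c (by omega) (by omega)

end Rvecpart

section MeasureLemmas

open scoped ENNReal

lemma tuple_law {Ω : Type*} [MeasurableSpace Ω] {μ : Measure Ω} {ι' : Type*}
    (f : ι' → Ω → ℤ) (hmeas : ∀ i, Measurable (f i))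
    (hindep : iIndepFun f μ)
    (S : Finset ι') (ν : ι' → Measure ℤ) [∀ i, IsProbabilityMeasure (ν i)]
    (hν : ∀ s ∈ S, Measure.map (f s) μ = ν s) :
    Measure.map (fun ω => fun s : S => f s ω) μ = Measure.pi (fun s : S => ν s) := by
  classical
  apply MeasureTheory.Measure.ext_of_singleton
  intro g
  have hm : Measurable (fun ω => fun s : S => f s ω) :=
    measurable_pi_lambda _ (fun s => hmeas s)
  rw [Measure.map_apply hm (measurableSet_singleton g)]
  set sets : ι' → Set ℤ := fun i => if h : i ∈ S then {g ⟨i, h⟩} else Set.univ with hsets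
  have hpre : (fun ω => fun s : S => f s ω) ⁻¹' {g} = ⋂ i ∈ S, f i ⁻¹' (sets i) := by
    ext ω
    simp only [Set.mem_preimage, Set.mem_singleton_iff, funext_iff, Set.mem_iInter]
    constructor
    · intro h i hi
      simp only [hsets, dif_pos hi, Set.mem_preimage, Set.mem_singleton_iff]
      exact h ⟨i, hi⟩
    · intro h s
      have := h s.1 s.2
      simp only [hsets, dif_pos s.2, Set.mem_preimage, Set.mem_singleton_iff] at this
      rw [this]
  rw [hpre]
  rw [hindep.measure_inter_preimage_eq_mul S
    (fun i hi => by
      simp only [hsets]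
      exact MeasurableSet.of_discrete)]
  have hsingle : ({g} : Set (S → ℤ)) = Set.pi Set.univ (fun s => {g s}) := by
    ext u
    simp [Set.mem_pi, funext_iff]
  rw [hsingle, Measure.pi_pi]
  have hfac : ∀ i ∈ S, μ (f i ⁻¹' sets i) = ν i (sets i) := by
    intro i hi
    rw [← hν i hi, Measure.map_apply (hmeas i) (by exact MeasurableSet.of_discrete)]
  rw [Finset.prod_congr rfl hfac]
  rw [← Finset.prod_coe_sort S (fun i => ν i (sets i))]
  apply Finset.prod_congr rfl
  intro s _
  congr 1
  simp only [hsets, dif_pos s.2]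

end MeasureLemmas


section Marginals

open scoped ENNReal

def nuR : Measure ℤ := (2 : ℝ≥0∞)⁻¹ • (Measure.dirac (-1) + Measure.dirac 1)
def nuX : Measure ℤ := (2 : ℝ≥0∞)⁻¹ • (Measure.dirac 0 + Measure.dirac 1)

lemma nuR_apply (s : Set ℤ) :
    nuR s = 2⁻¹ * (s.indicator 1 (-1) + s.indicator 1 1) := by
  unfold nuR
  rw [Measure.smul_apply, Measure.add_apply, Measure.dirac_apply, Measure.dirac_apply,
    smul_eq_mul]

lemma nuX_apply (s : Set ℤ) :
    nuX s = 2⁻¹ * (s.indicator 1 0 + s.indicator 1 1) := by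
  unfold nuX
  rw [Measure.smul_apply, Measure.add_apply, Measure.dirac_apply, Measure.dirac_apply,
    smul_eq_mul]

instance : IsProbabilityMeasure nuR := by
  constructor
  rw [nuR_apply]
  simp only [Set.indicator_univ, Pi.one_apply]
  rw [← two_mul, ← mul_assoc, ENNReal.inv_mul_cancel two_ne_zero ENNReal.ofNat_ne_top, one_mul]

instance : IsProbabilityMeasure nuX := by
  constructor
  rw [nuX_apply]
  simp only [Set.indicator_univ, Pi.one_apply]
  rw [← two_mul, ← mul_assoc, ENNReal.inv_mul_cancel two_ne_zero ENNReal.ofNat_ne_top, one_mul]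

lemma nuR_pm : nuR ({1, -1} : Set ℤ) = 1 := by
  rw [nuR_apply]
  rw [Set.indicator_apply, Set.indicator_apply]
  norm_num
  exact ENNReal.inv_mul_cancel two_ne_zero ENNReal.ofNat_ne_top

lemma nuX_pm : nuX ({0, 1} : Set ℤ) = 1 := by
  rw [nuX_apply]
  rw [Set.indicator_apply, Set.indicator_apply]
  norm_num
  exact ENNReal.inv_mul_cancel two_ne_zero ENNReal.ofNat_ne_top

lemma bit_match (q : ℤ) : nuR (bitOf ⁻¹' {q}) = nuX ({q} : Set ℤ) := by
  classical
  rw [nuR_apply, nuX_apply]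
  congr 1
  have h1 : bitOf (-1) = 1 := by norm_num [bitOf]
  have h0 : bitOf 1 = 0 := by norm_num [bitOf]
  rw [Set.indicator_apply, Set.indicator_apply, Set.indicator_apply, Set.indicator_apply]
  simp only [Set.mem_preimage, Set.mem_singleton_iff, h1, h0]
  by_cases hq0 : q = 0 <;> by_cases hq1 : q = 1 <;>
    simp [hq0, hq1, eq_comm] <;> omega

lemma map_congr_on {α β : Type*} [MeasurableSpace α] [MeasurableSpace β] {μ : Measure α}
    [IsProbabilityMeasure μ] {s : Set α} (hs : MeasurableSet s) (h1 : μ s = 1)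
    {f g : α → β} (hfg : ∀ x ∈ s, f x = g x) : Measure.map f μ = Measure.map g μ := by
  apply Measure.map_congr
  rw [Filter.EventuallyEq, ae_iff]
  have hc : μ sᶜ = 0 := by
    rw [measure_compl hs (measure_ne_top _ _), h1, measure_univ]
    simp
  exact measure_mono_null (fun x hx hxs => hx (hfg x hxs)) hc

end Marginals

section Windows

variable (j v c : ℤ) (k : ℕ)

def Hfin : Finset ℤ :=
  (Finset.Icc (v - (j - c)) (v + 2 + (j - c))).filter (fun h => (c + h) % 2 = 0)

def Dfin : Finset (ℕ × ℕ) :=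
  ((Finset.range (k + 1)).filter (fun n : ℕ => ((n : ℤ) ≤ j - c - 1))).image
    (fun n : ℕ => ((j - (n : ℤ) - c - 1).toNat, n))

def uextH (u : (Hfin j v c) → ℤ) (x : ℤ) : ℤ :=
  if hx : x ∈ Hfin j v c then u ⟨x, hx⟩ else 1

def bextD (t : (Dfin j c k) → ℤ) (n : Fin (k + 1)) : ℤ :=
  if he : ((j - ((n : ℕ) : ℤ) - c - 1).toNat, (n : ℕ)) ∈ Dfin j c k then t ⟨_, he⟩ else 0

lemma mem_Hfin {x : ℤ} (hb1 : v - (j - c) ≤ x) (hb2 : x ≤ v + 2 + (j - c))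
    (hp : (c + x) % 2 = 0) : x ∈ Hfin j v c := by
  unfold Hfin
  rw [Finset.mem_filter, Finset.mem_Icc]
  exact ⟨⟨hb1, hb2⟩, hp⟩

lemma mem_Dfin {n : ℕ} (hn : n < k + 1) (hv : (n : ℤ) ≤ j - c - 1) :
    ((j - (n : ℤ) - c - 1).toNat, n) ∈ Dfin j c k := by
  unfold Dfin
  rw [Finset.mem_image]
  exact ⟨n, by rw [Finset.mem_filter, Finset.mem_range]; exact ⟨hn, hv⟩, rfl⟩

lemma Dfin_snd {e : ℕ × ℕ} (he : e ∈ Dfin j c k) :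
    e.2 < k + 1 ∧ ((e.2 : ℤ) ≤ j - c - 1) ∧ e.1 = (j - (e.2 : ℤ) - c - 1).toNat := by
  unfold Dfin at he
  rw [Finset.mem_image] at he
  obtain ⟨n, hn, rfl⟩ := he
  rw [Finset.mem_filter, Finset.mem_range] at hn
  exact ⟨hn.1, hn.2, rfl⟩

end Windows


section Pery

open scoped ENNReal

variable {k : ℕ} {j v c : ℤ}

lemma pery (hc : c < j) (y : Fin (k + 1) → ℤ)
    (hmono : Monotone y)
    (hbd : ∀ n, v + 2 + c - j ≤ y n ∧ y n ≤ v + j - c ∧ (c + y n) % 2 = 0)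
    (hwedge : ∀ n : Fin (k + 1), j - c - 1 ≤ ((n : ℕ) : ℤ) → y n = v + j - c) :
    Measure.map (fun u : (Hfin j v c) → ℤ => FRt y (uextH j v c u))
      (Measure.pi fun _ : (Hfin j v c) => nuR)
    = Measure.map (fun t : (Dfin j c k) → ℤ => FXt y (bextD j c k t))
      (Measure.pi fun _ : (Dfin j c k) => nuX) := by
  classical
  have memH : ∀ n, y n ∈ Hfin j v c := fun n =>
    mem_Hfin _ _ _ (by have := hbd n; omega) (by have := hbd n; omega) (hbd n).2.2
  have hval : ∀ n : Fin (k + 1), prevv y n < y n → ((n : ℕ) : ℤ) ≤ j - c - 1 := by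
    intro n hact
    by_contra hbad
    push_neg at hbad
    have hn0 : (n : ℕ) ≠ 0 := by
      intro h0; rw [h0] at hbad; push_cast at hbad; omega
    have h1 : y n = v + j - c := hwedge n (by omega)
    have h2 : prevv y n = y ⟨(n : ℕ) - 1, by have := n.isLt; omega⟩ := by
      unfold prevv; rw [if_neg hn0]
    have h3 : y ⟨(n : ℕ) - 1, by have := n.isLt; omega⟩ = v + j - c :=
      hwedge _ (by push_cast; omega)
    rw [h2, h3, h1] at hact
    omega
  have memD : ∀ n : Fin (k + 1), prevv y n < y n →
      ((j - ((n : ℕ) : ℤ) - c - 1).toNat, (n : ℕ)) ∈ Dfin j c k := by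
    intro n hact
    exact mem_Dfin _ _ _ n.isLt (hval n hact)
  have hinj : ∀ a b : Fin (k + 1), prevv y a < y a → prevv y b < y b → y a = y b → a = b := by
    have key : ∀ a b : Fin (k + 1), (a : ℕ) < (b : ℕ) → prevv y b < y b → y a ≠ y b := by
      intro a b hab hb hyab
      have hb0 : (b : ℕ) ≠ 0 := by omega
      have h2 : prevv y b = y ⟨(b : ℕ) - 1, by have := b.isLt; omega⟩ := by
        unfold prevv; rw [if_neg hb0]
      have h3 : y a ≤ y ⟨(b : ℕ) - 1, by have := b.isLt; omega⟩ :=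
        hmono (by rw [Fin.le_def]; show (a : ℕ) ≤ (b : ℕ) - 1; omega)
      rw [h2] at hb
      omega
    intro a b ha hb hab
    rcases lt_trichotomy (a : ℕ) (b : ℕ) with h | h | h
    · exact absurd hab (key a b h hb)
    · exact Fin.ext h
    · exact absurd hab.symm (key b a h ha)
  -- step 1: replace by Gfun representation
  have hstep1 : Measure.map (fun u : (Hfin j v c) → ℤ => FRt y (uextH j v c u))
      (Measure.pi fun _ : (Hfin j v c) => nuR)
      = Measure.map (fun u : (Hfin j v c) → ℤ => Gfun y (cRt y (uextH j v c u)))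
        (Measure.pi fun _ : (Hfin j v c) => nuR) := by
    refine map_congr_on (s := Set.pi Set.univ fun _ : (Hfin j v c) => ({1, -1} : Set ℤ))
      MeasurableSet.of_discrete ?_ ?_
    · rw [Measure.pi_pi]
      simp [nuR_pm]
    · intro u hu
      refine FRt_eq_G ?_
      intro x
      unfold uextH
      split
      · rename_i hx
        have := hu ⟨x, hx⟩ (Set.mem_univ _)
        simpa using this
      · left; rfl
  have hstep2 : Measure.map (fun t : (Dfin j c k) → ℤ => FXt y (bextD j c k t))
      (Measure.pi fun _ : (Dfin j c k) => nuX)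
      = Measure.map (fun t : (Dfin j c k) → ℤ => Gfun y (cXt y (bextD j c k t)))
        (Measure.pi fun _ : (Dfin j c k) => nuX) := by
    refine map_congr_on (s := Set.pi Set.univ fun _ : (Dfin j c k) => ({0, 1} : Set ℤ))
      MeasurableSet.of_discrete ?_ ?_
    · rw [Measure.pi_pi]
      simp [nuX_pm]
    · intro t ht
      refine FXt_eq_G ?_
      intro n
      unfold bextD
      split
      · rename_i he
        have := ht ⟨_, he⟩ (Set.mem_univ _)
        simpa using this
      · left; rfl
  rw [hstep1, hstep2]
  rw [show (fun u : (Hfin j v c) → ℤ => Gfun y (cRt y (uextH j v c u)))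
      = (Gfun y) ∘ (fun u : (Hfin j v c) → ℤ => cRt y (uextH j v c u)) from rfl]
  rw [show (fun t : (Dfin j c k) → ℤ => Gfun y (cXt y (bextD j c k t)))
      = (Gfun y) ∘ (fun t : (Dfin j c k) → ℤ => cXt y (bextD j c k t)) from rfl]
  rw [← Measure.map_map Measurable.of_discrete Measurable.of_discrete,
      ← Measure.map_map Measurable.of_discrete Measurable.of_discrete]
  congr 1
  -- core counting identity
  apply MeasureTheory.Measure.ext_of_singleton
  intro g
  rw [Measure.map_apply Measurable.of_discrete (measurableSet_singleton g),
      Measure.map_apply Measurable.of_discrete (measurableSet_singleton g)]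
  by_cases hg : ∀ n : Fin (k + 1), prevv y n < y n ∨ g n = 0
  · -- main case
    set Bz : ℤ → Set ℤ :=
      fun z => {x | ∀ n : Fin (k + 1), prevv y n < y n → y n = z → bitOf x = g n} with hBz
    set Cz : ℕ × ℕ → Set ℤ :=
      fun e => {x | ∀ n : Fin (k + 1), prevv y n < y n →
        ((j - ((n : ℕ) : ℤ) - c - 1).toNat, (n : ℕ)) = e → x = g n} with hCz
    have hpre1 : (fun u : (Hfin j v c) → ℤ => cRt y (uextH j v c u)) ⁻¹' {g}
        = Set.pi Set.univ (fun s : (Hfin j v c) => Bz ↑s) := by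
      ext u
      simp only [Set.mem_preimage, Set.mem_singleton_iff, funext_iff, Set.mem_pi,
        Set.mem_univ, forall_true_left]
      constructor
      · intro h s n hact hyn
        have hn := h n
        unfold cRt at hn
        rw [if_pos hact] at hn
        unfold uextH at hn
        rw [dif_pos (memH n)] at hn
        rw [← hn]
        congr 1
        exact congrArg u (Subtype.ext hyn.symm)
      · intro h n
        unfold cRt
        by_cases hact : prevv y n < y n
        · rw [if_pos hact]
          unfold uextH
          rw [dif_pos (memH n)]
          exact h ⟨y n, memH n⟩ n hact rfl
        · rw [if_neg hact]
          exact ((hg n).resolve_left hact).symm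
    have hpre2 : (fun t : (Dfin j c k) → ℤ => cXt y (bextD j c k t)) ⁻¹' {g}
        = Set.pi Set.univ (fun e : (Dfin j c k) => Cz ↑e) := by
      ext t
      simp only [Set.mem_preimage, Set.mem_singleton_iff, funext_iff, Set.mem_pi,
        Set.mem_univ, forall_true_left]
      constructor
      · intro h e n hact hen
        have hn := h n
        unfold cXt at hn
        rw [if_pos hact] at hn
        unfold bextD at hn
        rw [dif_pos (memD n hact)] at hn
        rw [← hn]
        congr 1
        exact Subtype.ext hen.symm
      · intro h n
        unfold cXt
        by_cases hact : prevv y n < y n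
        · rw [if_pos hact]
          unfold bextD
          rw [dif_pos (memD n hact)]
          exact h ⟨_, memD n hact⟩ n hact rfl
        · rw [if_neg hact]
          exact ((hg n).resolve_left hact).symm
    rw [hpre1, hpre2, Measure.pi_pi, Measure.pi_pi]
    set Afin : Finset (Fin (k + 1)) := Finset.univ.filter (fun n => prevv y n < y n) with hAfin
    have hR : (∏ s : (Hfin j v c), nuR (Bz ↑s)) = ∏ n ∈ Afin, nuR (bitOf ⁻¹' {g n}) := by
      rw [Finset.prod_coe_sort (Hfin j v c) (fun z => nuR (Bz z))]
      have himgsub : Afin.image y ⊆ Hfin j v c := by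
        intro z hz
        rw [Finset.mem_image] at hz
        obtain ⟨n, _, rfl⟩ := hz
        exact memH n
      rw [← Finset.prod_subset himgsub (fun z _ hz => by
        have : Bz z = Set.univ := by
          ext x
          simp only [hBz, Set.mem_setOf_eq, Set.mem_univ, iff_true]
          intro n hact hyn
          exfalso
          apply hz
          rw [Finset.mem_image]
          exact ⟨n, by rw [hAfin, Finset.mem_filter]; exact ⟨Finset.mem_univ n, hact⟩, hyn⟩
        rw [this, measure_univ])]
      rw [Finset.prod_image (fun a ha b hb hab => hinj a b
        (by rw [Finset.mem_coe, hAfin, Finset.mem_filter] at ha; exact ha.2)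
        (by rw [Finset.mem_coe, hAfin, Finset.mem_filter] at hb; exact hb.2) hab)]
      apply Finset.prod_congr rfl
      intro n hn
      rw [hAfin, Finset.mem_filter] at hn
      congr 1
      ext x
      simp only [hBz, Set.mem_setOf_eq, Set.mem_preimage, Set.mem_singleton_iff]
      constructor
      · intro h; exact h n hn.2 rfl
      · intro h n' hact' hy'
        have : n' = n := hinj n' n hact' hn.2 hy'
        rw [this]; exact h
    have hX : (∏ e : (Dfin j c k), nuX (Cz ↑e)) = ∏ n ∈ Afin, nuX ({g n} : Set ℤ) := by
      rw [Finset.prod_coe_sort (Dfin j c k) (fun e => nuX (Cz e))]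
      set co : Fin (k + 1) → ℕ × ℕ :=
        fun n => ((j - ((n : ℕ) : ℤ) - c - 1).toNat, (n : ℕ)) with hco
      have himgsub : Afin.image co ⊆ Dfin j c k := by
        intro e he
        rw [Finset.mem_image] at he
        obtain ⟨n, hn, rfl⟩ := he
        rw [hAfin, Finset.mem_filter] at hn
        exact memD n hn.2
      rw [← Finset.prod_subset himgsub (fun e _ he => by
        have : Cz e = Set.univ := by
          ext x
          simp only [hCz, Set.mem_setOf_eq, Set.mem_univ, iff_true]
          intro n hact hen
          exfalso
          apply he
          rw [Finset.mem_image]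
          exact ⟨n, by rw [hAfin, Finset.mem_filter]; exact ⟨Finset.mem_univ n, hact⟩, hen⟩
        rw [this, measure_univ])]
      rw [Finset.prod_image (fun a ha b hb hab => by
        have : (a : ℕ) = (b : ℕ) := congrArg Prod.snd hab
        exact Fin.ext this)]
      apply Finset.prod_congr rfl
      intro n hn
      rw [hAfin, Finset.mem_filter] at hn
      congr 1
      ext x
      simp only [hCz, Set.mem_setOf_eq, Set.mem_singleton_iff]
      constructor
      · intro h; exact h n hn.2 rfl
      · intro h n' hact' he'
        have : (n' : ℕ) = (n : ℕ) := congrArg Prod.snd he'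
        have : n' = n := Fin.ext this
        rw [this]; exact h
    rw [hR, hX]
    exact Finset.prod_congr rfl (fun n _ => bit_match (g n))
  · -- degenerate case: both sides are zero
    push_neg at hg
    obtain ⟨n0, hact0, hg0⟩ := hg
    have hact0' : ¬ prevv y n0 < y n0 := not_lt.mpr hact0
    have e1 : (fun u : (Hfin j v c) → ℤ => cRt y (uextH j v c u)) ⁻¹' {g} = ∅ := by
      rw [Set.eq_empty_iff_forall_notMem]
      intro u hu
      simp only [Set.mem_preimage, Set.mem_singleton_iff, funext_iff] at hu
      have := hu n0
      unfold cRt at this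
      rw [if_neg hact0'] at this
      exact hg0 this.symm
    have e2 : (fun t : (Dfin j c k) → ℤ => cXt y (bextD j c k t)) ⁻¹' {g} = ∅ := by
      rw [Set.eq_empty_iff_forall_notMem]
      intro t ht
      simp only [Set.mem_preimage, Set.mem_singleton_iff, funext_iff] at ht
      have := ht n0
      unfold cXt at this
      rw [if_neg hact0'] at this
      exact hg0 this.symm
    rw [e1, e2, measure_empty, measure_empty]

end Pery


section MapProd

lemma map_prod_eq {A B B' C : Type*} [MeasurableSpace A] [MeasurableSpace B]
    [MeasurableSpace B'] [MeasurableSpace C] [Countable C] [MeasurableSingletonClass C]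
    (κ : Measure A) (m₂ : Measure B) (m₂' : Measure B') [SFinite m₂] [SFinite m₂']
    (F : A → B → C) (F' : A → B' → C)
    (hF : Measurable (fun p : A × B => F p.1 p.2))
    (hF' : Measurable (fun p : A × B' => F' p.1 p.2))
    (hslice : ∀ᵐ y ∂κ, Measure.map (F y) m₂ = Measure.map (F' y) m₂') :
    Measure.map (fun p : A × B => F p.1 p.2) (κ.prod m₂)
      = Measure.map (fun p : A × B' => F' p.1 p.2) (κ.prod m₂') := by
  apply MeasureTheory.Measure.ext_of_singleton
  intro x
  rw [Measure.map_apply hF (measurableSet_singleton x),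
      Measure.map_apply hF' (measurableSet_singleton x),
      Measure.prod_apply (hF (measurableSet_singleton x)),
      Measure.prod_apply (hF' (measurableSet_singleton x))]
  apply lintegral_congr_ae
  filter_upwards [hslice] with y hy
  have h1 : (Prod.mk y ⁻¹' ((fun p : A × B => F p.1 p.2) ⁻¹' {x})) = (F y) ⁻¹' {x} := rfl
  have h2 : (Prod.mk y ⁻¹' ((fun p : A × B' => F' p.1 p.2) ⁻¹' {x})) = (F' y) ⁻¹' {x} := rfl
  have hFy : Measurable (F y) := hF.comp measurable_prodMk_left
  have hF'y : Measurable (F' y) := hF'.comp measurable_prodMk_left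
  rw [h1, h2, ← Measure.map_apply hFy (measurableSet_singleton x),
    ← Measure.map_apply hF'y (measurableSet_singleton x), hy]

end MapProd


section TupleLaw2

lemma tuple_law2 {Ω ι' σ : Type*} [MeasurableSpace Ω] {μ : Measure Ω} [Fintype σ]
    (f : ι' → Ω → ℤ) (hmeas : ∀ i, Measurable (f i))
    (hindep : iIndepFun f μ)
    (E : σ → ι') (hE : Function.Injective E)
    (ν : Measure ℤ) [IsProbabilityMeasure ν]
    (hν : ∀ s : σ, Measure.map (f (E s)) μ = ν) :
    Measure.map (fun ω => fun s : σ => f (E s) ω) μ = Measure.pi (fun _ : σ => ν) := by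
  classical
  apply MeasureTheory.Measure.ext_of_singleton
  intro g
  have hm : Measurable (fun ω => fun s : σ => f (E s) ω) :=
    measurable_pi_lambda _ (fun s => hmeas _)
  rw [Measure.map_apply hm (measurableSet_singleton g)]
  set T : Finset ι' := Finset.univ.image E with hT
  set sets : ι' → Set ℤ := fun i => if h : ∃ s : σ, E s = i then {g h.choose} else Set.univ
    with hsets
  have hsetsE : ∀ s : σ, sets (E s) = {g s} := by
    intro s
    have hex : ∃ s' : σ, E s' = E s := ⟨s, rfl⟩
    simp only [hsets, dif_pos hex]
    congr 1
    exact congrArg g (hE hex.choose_spec)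
  have hpre : (fun ω => fun s : σ => f (E s) ω) ⁻¹' {g} = ⋂ i ∈ T, f i ⁻¹' sets i := by
    ext ω
    simp only [Set.mem_preimage, Set.mem_singleton_iff, funext_iff, Set.mem_iInter]
    constructor
    · intro h i hi
      rw [hT, Finset.mem_image] at hi
      obtain ⟨s, _, rfl⟩ := hi
      rw [hsetsE s]
      exact h s
    · intro h s
      have := h (E s) (by rw [hT, Finset.mem_image]; exact ⟨s, Finset.mem_univ s, rfl⟩)
      rw [hsetsE s] at this
      exact this
  rw [hpre, hindep.measure_inter_preimage_eq_mul T (fun i _ => MeasurableSet.of_discrete)]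
  have hsingle : ({g} : Set (σ → ℤ)) = Set.pi Set.univ (fun s => {g s}) := by
    ext u; simp [funext_iff]
  rw [hsingle, Measure.pi_pi, hT,
    Finset.prod_image (fun a _ b _ hab => hE hab)]
  apply Finset.prod_congr rfl
  intro s _
  rw [hsetsE s, ← hν s, Measure.map_apply (hmeas _) (measurableSet_singleton _)]

end TupleLaw2

section Windows2

open scoped Classical

/-- even-site index type -/
abbrev ESite : Type := {z : ℤ × ℤ // Even (z.1 + z.2)}

/-- the window of even sites with columns in `[c+1, j-1]` used by `Rvec` at column `c+1`. -/
def Wfin (j v c : ℤ) : Finset ESite :=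
  (((Finset.Icc (c + 1) (j - 1)) ×ˢ (Finset.Icc (v - (j - c)) (v + 2 + (j - c)))).filter
    (fun z => (z.1 + z.2) % 2 = 0)).subtype _

/-- extension of a window configuration to a full sign field. -/
def extW {W : Finset ESite} (t : W → ℤ) (z : ℤ × ℤ) : ℤ :=
  if h : ∃ s : W, ((s : ESite) : ℤ × ℤ) = z then t h.choose else 1

lemma extW_PM {W : Finset ESite} (t : W → ℤ) (ht : ∀ s, t s = 1 ∨ t s = -1) :
    PM (extW t) := by
  intro z
  unfold extW
  split
  · exact ht _
  · left; rfl

lemma extW_spec {W : Finset ESite} (t : W → ℤ) {z : ℤ × ℤ}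
    (h : ∃ s : W, ((s : ESite) : ℤ × ℤ) = z) (f : ℤ × ℤ → ℤ)
    (hf : ∀ s : W, t s = f ((s : ESite) : ℤ × ℤ)) : extW t z = f z := by
  unfold extW
  rw [dif_pos h, hf h.choose, h.choose_spec]

/-- the grid window for `XV` at column `c+1`. -/
def Gfin (j c : ℤ) (k : ℕ) : Finset (ℕ × ℕ) :=
  ((Finset.range ((j - c).toNat + k + 2)) ×ˢ (Finset.range (k + 1))).filter
    (fun e => (e.1 : ℤ) + (e.2 : ℤ) ≤ j - c - 2)

def extG {G : Finset (ℕ × ℕ)} (t : G → ℤ) (e : ℕ × ℕ) : ℤ :=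
  if h : ∃ s : G, (s : ℕ × ℕ) = e then t h.choose else 0

lemma extG_spec {G : Finset (ℕ × ℕ)} (t : G → ℤ) {e : ℕ × ℕ}
    (h : ∃ s : G, (s : ℕ × ℕ) = e) (f : ℕ × ℕ → ℤ)
    (hf : ∀ s : G, t s = f (s : ℕ × ℕ)) : extG t e = f e := by
  unfold extG
  rw [dif_pos h, hf h.choose, h.choose_spec]

end Windows2


section KeyInduction

open scoped Classical

variable {Ω Ω' : Type*} [MeasurableSpace Ω] [MeasurableSpace Ω']

lemma key_induction (μ : Measure Ω) (μ' : Measure Ω')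
    [IsProbabilityMeasure μ] [IsProbabilityMeasure μ']
    (ξ : Ω → ℤ × ℤ → ℤ) (hξval : ∀ ω, PM (ξ ω))
    (hξmeas : ∀ z, Measurable fun ω => ξ ω z)
    (hξindep : iIndepFun
      (fun (z : ESite) (ω : Ω) => ξ ω z) μ)
    (hξunif : ∀ z : ℤ × ℤ, Even (z.1 + z.2) → Measure.map (fun ω => ξ ω z) μ = nuR)
    (w : Ω' → ℕ × ℕ → ℤ) (hw01 : ∀ ω e, w ω e = 0 ∨ w ω e = 1)
    (hwmeas : ∀ e, Measurable fun ω => w ω e)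
    (hwindep : iIndepFun (fun (e : ℕ × ℕ) (ω : Ω') => w ω e) μ')
    (hwunif : ∀ e, Measure.map (fun ω => w ω e) μ' = nuX)
    (j v : ℤ) (hjv : (j + v) % 2 = 0) (k : ℕ) :
    ∀ t : ℕ, ∀ c : ℤ, j - c = (t : ℤ) →
      Measure.map (fun ω => Rvec (ξ ω) j v k c) μ
        = Measure.map (fun ω' => XV (w ω') j v k c) μ' := by
  intro t
  induction t with
  | zero =>
    intro c htc
    rw [show c = j from by omega]
    have h1 : (fun ω => Rvec (ξ ω) j v k j) = fun _ => (fun _ : Fin (k + 1) => v + 1) := by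
      funext ω; exact Rvec_j
    have h2 : (fun ω' => XV (w ω') j v k j) = fun _ => (fun _ : Fin (k + 1) => v + 1) := by
      funext ω'; funext n; exact XV_j n
    rw [h1, h2, Measure.map_const, Measure.map_const, measure_univ, measure_univ]
  | succ t IH =>
    intro c htc
    have hc : c < j := by omega
    have hc1 : c + 1 ≤ j := by omega
    have IHc := IH (c + 1) (by omega)
    -- ======== R side ========
    -- heights of the next column lie in the window
    have hyH : ∀ ω (n : Fin (k + 1)), Rvec (ξ ω) j v k (c + 1) n ∈ Hfin j v c := by
      intro ω n
      have hb := Rvec_pm (j := j) (v := v) (hξval ω) hc1 n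
      exact mem_Hfin _ _ _ (by omega) (by omega) (by omega)
    -- locality: Rvec at column c+1 only depends on the window sites
    have hVeq : ∀ ω, Rvec (ξ ω) j v k (c + 1)
        = Rvec (extW (fun s : (Wfin j v c) => ξ ω ((s : ESite) : ℤ × ℤ))) j v k (c + 1) := by
      intro ω
      funext n
      unfold Rvec
      refine rUp_local (hξval ω)
        (extW_PM _ (fun s => hξval ω _)) (i₀ := c + 1) hjv ?_ (j - c - 1).toNat (c + 1)
        (by omega) (le_refl _) (n : ℕ)
      intro c' h hcc' hc'j hb1 hb2 hpar
      have hmemf : ((c', h) : ℤ × ℤ) ∈ ((Finset.Icc (c + 1) (j - 1)) ×ˢ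
          (Finset.Icc (v - (j - c)) (v + 2 + (j - c)))).filter
            (fun z => (z.1 + z.2) % 2 = 0) := by
        rw [Finset.mem_filter, Finset.mem_product, Finset.mem_Icc, Finset.mem_Icc]
        exact ⟨⟨⟨by omega, by omega⟩, ⟨by omega, by omega⟩⟩, hpar⟩
      have hex : ∃ s : (Wfin j v c), ((s : ESite) : ℤ × ℤ) = (c', h) := by
        refine ⟨⟨⟨(c', h), Int.even_iff.mpr hpar⟩, ?_⟩, rfl⟩
        unfold Wfin
        rw [Finset.mem_subtype]
        exact hmemf
      exact (extW_spec _ hex (ξ ω) (fun s => rfl)).symm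
    have htupleW : Measurable (fun ω => fun s : (Wfin j v c) => ξ ω ((s : ESite) : ℤ × ℤ)) :=
      measurable_pi_lambda _ (fun s => hξmeas _)
    have hVmeas : Measurable (fun ω => Rvec (ξ ω) j v k (c + 1)) := by
      have heq : (fun ω => Rvec (ξ ω) j v k (c + 1))
          = (fun tt : (Wfin j v c) → ℤ => Rvec (extW tt) j v k (c + 1))
            ∘ (fun ω => fun s : (Wfin j v c) => ξ ω ((s : ESite) : ℤ × ℤ)) := by
        funext ω; exact hVeq ω
      rw [heq]
      exact Measurable.of_discrete.comp htupleW
    -- column tuple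
    set EH : (Hfin j v c) → ESite := fun s => ⟨(c, (s : ℤ)), by
      have hs := s.2
      unfold Hfin at hs
      rw [Finset.mem_filter] at hs
      exact Int.even_iff.mpr hs.2⟩ with hEHdef
    have hEHinj : Function.Injective EH := by
      intro a b hab
      have : ((EH a : ESite) : ℤ × ℤ) = ((EH b : ESite) : ℤ × ℤ) := by rw [hab]
      have h2 : (a : ℤ) = (b : ℤ) := congrArg Prod.snd this
      exact Subtype.ext h2
    have hcolmeas : Measurable (fun ω => fun s : (Hfin j v c) => ξ ω (c, (s : ℤ))) :=
      measurable_pi_lambda _ (fun s => hξmeas _)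
    have hcolLaw : Measure.map (fun ω => fun s : (Hfin j v c) => ξ ω (c, (s : ℤ))) μ
        = Measure.pi (fun _ : (Hfin j v c) => nuR) := by
      have := tuple_law2 (μ := μ) (fun z : ESite => fun ω => ξ ω z)
        (fun z => hξmeas _) hξindep EH hEHinj nuR
        (fun s => hξunif _ (EH s).2)
      convert this using 2
    -- independence of the pair
    set CSfin : Finset ESite := Finset.univ.image EH with hCSfin
    have hCS : ∀ s : (Hfin j v c), EH s ∈ CSfin := by
      intro s
      rw [hCSfin, Finset.mem_image]
      exact ⟨s, Finset.mem_univ s, rfl⟩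
    have hdisj : Disjoint (Wfin j v c) CSfin := by
      rw [Finset.disjoint_left]
      intro z hzW hzC
      unfold Wfin at hzW
      rw [Finset.mem_subtype, Finset.mem_filter, Finset.mem_product, Finset.mem_Icc] at hzW
      rw [hCSfin, Finset.mem_image] at hzC
      obtain ⟨s, _, rfl⟩ := hzC
      have : ((EH s : ESite) : ℤ × ℤ).1 = c := rfl
      omega
    have hbase := hξindep.indepFun_finset (Wfin j v c) CSfin hdisj
      (fun z => hξmeas _)
    have hIndep : IndepFun (fun ω => Rvec (ξ ω) j v k (c + 1))
        (fun ω => fun s : (Hfin j v c) => ξ ω (c, (s : ℤ))) μ := by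
      have hcomp := hbase.comp
        (φ := fun tt : (Wfin j v c) → ℤ => Rvec (extW tt) j v k (c + 1))
        (ψ := fun u : CSfin → ℤ => fun s : (Hfin j v c) => u ⟨EH s, hCS s⟩)
        Measurable.of_discrete Measurable.of_discrete
      have e1 : ((fun tt : (Wfin j v c) → ℤ => Rvec (extW tt) j v k (c + 1))
          ∘ (fun ω (i : (Wfin j v c)) => ξ ω ((i : ESite) : ℤ × ℤ)))
          = (fun ω => Rvec (ξ ω) j v k (c + 1)) := by
        funext ω; exact (hVeq ω).symm
      have e2 : ((fun u : CSfin → ℤ => fun s : (Hfin j v c) => u ⟨EH s, hCS s⟩)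
          ∘ (fun ω (i : CSfin) => ξ ω ((i : ESite) : ℤ × ℤ)))
          = (fun ω => fun s : (Hfin j v c) => ξ ω (c, (s : ℤ))) := by
        funext ω s; rfl
      rw [e1, e2] at hcomp
      exact hcomp
    have hpairR : Measure.map
        (fun ω => (Rvec (ξ ω) j v k (c + 1), fun s : (Hfin j v c) => ξ ω (c, (s : ℤ)))) μ
        = (Measure.map (fun ω => Rvec (ξ ω) j v k (c + 1)) μ).prod
            (Measure.pi (fun _ : (Hfin j v c) => nuR)) := by
      rw [← hcolLaw]
      exact (indepFun_iff_map_prod_eq_prod_map_map hVmeas.aemeasurable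
        hcolmeas.aemeasurable).mp hIndep
    have hRfun : (fun ω => Rvec (ξ ω) j v k c)
        = (fun p : (Fin (k + 1) → ℤ) × (((Hfin j v c)) → ℤ) => FRt p.1 (uextH j v c p.2))
          ∘ (fun ω => (Rvec (ξ ω) j v k (c + 1),
              fun s : (Hfin j v c) => ξ ω (c, (s : ℤ)))) := by
      funext ω
      show Rvec (ξ ω) j v k c
        = FRt (Rvec (ξ ω) j v k (c + 1))
            (uextH j v c (fun s : (Hfin j v c) => ξ ω (c, (s : ℤ))))
      rw [Rvec_step (hξval ω) hc]
      funext n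
      unfold FRt
      congr 2
      unfold uextH
      rw [dif_pos (hyH ω n)]
    have hRchain : Measure.map (fun ω => Rvec (ξ ω) j v k c) μ
        = Measure.map
            (fun p : (Fin (k + 1) → ℤ) × (((Hfin j v c)) → ℤ) => FRt p.1 (uextH j v c p.2))
            ((Measure.map (fun ω => Rvec (ξ ω) j v k (c + 1)) μ).prod
              (Measure.pi (fun _ : (Hfin j v c) => nuR))) := by
      rw [hRfun, ← Measure.map_map Measurable.of_discrete (hVmeas.prodMk hcolmeas), hpairR]
    -- ======== X side ========
    have hZeq : ∀ ω', XV (w ω') j v k (c + 1)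
        = XV (extG (fun s : (Gfin j c k) => w ω' (s : ℕ × ℕ))) j v k (c + 1) := by
      intro ω'
      funext n
      unfold XV
      by_cases hbr : j - ((n : ℕ) : ℤ) ≤ c + 1
      · rw [if_pos hbr, if_pos hbr]
      · rw [if_neg hbr, if_neg hbr]
        have hloc := TSJ_local (w := w ω')
          (w' := extG (fun s : (Gfin j c k) => w ω' (s : ℕ × ℕ)))
          (m := (j - ((n : ℕ) : ℤ) - (c + 1)).toNat) (n := (n : ℕ)) ?_
        · rw [hloc]
        · intro a b hab hbn
          have hex : ∃ s : (Gfin j c k), (s : ℕ × ℕ) = (a, b) := by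
            refine ⟨⟨(a, b), ?_⟩, rfl⟩
            unfold Gfin
            rw [Finset.mem_filter, Finset.mem_product, Finset.mem_range, Finset.mem_range]
            have hn := n.isLt
            refine ⟨⟨by omega, by omega⟩, by push_cast; omega⟩
          exact (extG_spec _ hex (w ω') (fun s => rfl)).symm
    have htupleG : Measurable (fun ω' => fun s : (Gfin j c k) => w ω' (s : ℕ × ℕ)) :=
      measurable_pi_lambda _ (fun s => hwmeas _)
    have hZmeas : Measurable (fun ω' => XV (w ω') j v k (c + 1)) := by
      have heq : (fun ω' => XV (w ω') j v k (c + 1))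
          = (fun tt : (Gfin j c k) → ℤ => XV (extG tt) j v k (c + 1))
            ∘ (fun ω' => fun s : (Gfin j c k) => w ω' (s : ℕ × ℕ)) := by
        funext ω'; exact hZeq ω'
      rw [heq]
      exact Measurable.of_discrete.comp htupleG
    have hdTmeas : Measurable (fun ω' => fun s : (Dfin j c k) => w ω' (s : ℕ × ℕ)) :=
      measurable_pi_lambda _ (fun s => hwmeas _)
    have hdTLaw : Measure.map (fun ω' => fun s : (Dfin j c k) => w ω' (s : ℕ × ℕ)) μ'
        = Measure.pi (fun _ : (Dfin j c k) => nuX) := by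
      have := tuple_law2 (μ := μ') (fun e : ℕ × ℕ => fun ω' => w ω' e)
        (fun e => hwmeas _) hwindep (fun s : (Dfin j c k) => (s : ℕ × ℕ))
        Subtype.val_injective nuX (fun s => hwunif _)
      convert this using 2
    have hdisjX : Disjoint (Gfin j c k) (Dfin j c k) := by
      rw [Finset.disjoint_left]
      intro e heG heD
      unfold Gfin at heG
      rw [Finset.mem_filter] at heG
      obtain ⟨h1, h2, h3⟩ := Dfin_snd j c k heD
      have : (e.1 : ℤ) = j - (e.2 : ℤ) - c - 1 := by rw [h3]; omega
      omega
    have hbaseX := hwindep.indepFun_finset (Gfin j c k) (Dfin j c k) hdisjX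
      (fun e => hwmeas _)
    have hIndepX : IndepFun (fun ω' => XV (w ω') j v k (c + 1))
        (fun ω' => fun s : (Dfin j c k) => w ω' (s : ℕ × ℕ)) μ' := by
      have hcomp := hbaseX.comp
        (φ := fun tt : (Gfin j c k) → ℤ => XV (extG tt) j v k (c + 1))
        (ψ := id) Measurable.of_discrete measurable_id
      have e1 : ((fun tt : (Gfin j c k) → ℤ => XV (extG tt) j v k (c + 1))
          ∘ (fun ω' (i : (Gfin j c k)) => w ω' (i : ℕ × ℕ)))
          = (fun ω' => XV (w ω') j v k (c + 1)) := by
        funext ω'; exact (hZeq ω').symm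
      have e2 : (id ∘ (fun ω' (i : (Dfin j c k)) => w ω' (i : ℕ × ℕ)))
          = (fun ω' => fun s : (Dfin j c k) => w ω' (s : ℕ × ℕ)) := rfl
      rw [e1, e2] at hcomp
      exact hcomp
    have hpairX : Measure.map
        (fun ω' => (XV (w ω') j v k (c + 1), fun s : (Dfin j c k) => w ω' (s : ℕ × ℕ))) μ'
        = (Measure.map (fun ω' => XV (w ω') j v k (c + 1)) μ').prod
            (Measure.pi (fun _ : (Dfin j c k) => nuX)) := by
      rw [← hdTLaw]
      exact (indepFun_iff_map_prod_eq_prod_map_map hZmeas.aemeasurable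
        hdTmeas.aemeasurable).mp hIndepX
    have hXfun : (fun ω' => XV (w ω') j v k c)
        = (fun p : (Fin (k + 1) → ℤ) × (((Dfin j c k)) → ℤ) => FXt p.1 (bextD j c k p.2))
          ∘ (fun ω' => (XV (w ω') j v k (c + 1),
              fun s : (Dfin j c k) => w ω' (s : ℕ × ℕ))) := by
      funext ω'
      show XV (w ω') j v k c
        = FXt (XV (w ω') j v k (c + 1))
            (bextD j c k (fun s : (Dfin j c k) => w ω' (s : ℕ × ℕ)))
      rw [XV_step (hw01 ω') hc]
      funext n
      unfold FXt
      congr 2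
      unfold xbits bextD
      by_cases hvn : ((n : ℕ) : ℤ) ≤ j - c - 1
      · rw [if_pos hvn, dif_pos (mem_Dfin j c k n.isLt hvn)]
      · rw [if_neg hvn, dif_neg (by
          intro hmem
          obtain ⟨h1, h2, h3⟩ := Dfin_snd j c k hmem
          exact hvn h2)]
    have hXchain : Measure.map (fun ω' => XV (w ω') j v k c) μ'
        = Measure.map
            (fun p : (Fin (k + 1) → ℤ) × (((Dfin j c k)) → ℤ) => FXt p.1 (bextD j c k p.2))
            ((Measure.map (fun ω' => XV (w ω') j v k (c + 1)) μ').prod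
              (Measure.pi (fun _ : (Dfin j c k) => nuX))) := by
      rw [hXfun, ← Measure.map_map Measurable.of_discrete (hZmeas.prodMk hdTmeas), hpairX]
    -- ======== combine ========
    rw [hRchain, hXchain, IHc]
    apply map_prod_eq _ _ _
      (fun y (u : ((Hfin j v c)) → ℤ) => FRt y (uextH j v c u))
      (fun y (tt : ((Dfin j c k)) → ℤ) => FXt y (bextD j c k tt))
      Measurable.of_discrete Measurable.of_discrete
    -- a.e. slice equality via the invariants and pery
    rw [← IHc, ae_iff]
    apply measure_mono_null (t := {y : Fin (k + 1) → ℤ | ¬ (Monotone y ∧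
      (∀ n, v + 2 + c - j ≤ y n ∧ y n ≤ v + j - c ∧ (c + y n) % 2 = 0) ∧
      (∀ n : Fin (k + 1), j - c - 1 ≤ ((n : ℕ) : ℤ) → y n = v + j - c))})
    · intro y hy
      simp only [Set.mem_setOf_eq] at hy ⊢
      intro hinv
      exact hy (pery hc y hinv.1 hinv.2.1 hinv.2.2)
    · rw [Measure.map_apply hVmeas MeasurableSet.of_discrete]
      convert measure_empty (μ := μ)
      rw [Set.eq_empty_iff_forall_notMem]
      intro ω hω
      simp only [Set.mem_preimage, Set.mem_setOf_eq] at hω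
      apply hω
      refine ⟨Rvec_mono (hξval ω) hc1, ?_, ?_⟩
      · intro n
        have hb := Rvec_pm (j := j) (v := v) (hξval ω) hc1 n
        omega
      · intro n hn
        have := Rvec_wedge (j := j) (v := v) (hξval ω) hc1 n (by omega)
        rw [this]
        omega

end KeyInduction


section FinalMeas

open scoped Classical

variable {Ω Ω' : Type*} [MeasurableSpace Ω] [MeasurableSpace Ω']

lemma Rvec_measurable (ξ : Ω → ℤ × ℤ → ℤ) (hξval : ∀ ω, PM (ξ ω))
    (hξmeas : ∀ z, Measurable fun ω => ξ ω z) (j v : ℤ) (hjv : (j + v) % 2 = 0) (k : ℕ)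
    {i : ℤ} (hij : i ≤ j) : Measurable (fun ω => Rvec (ξ ω) j v k i) := by
  have heq : ∀ ω, Rvec (ξ ω) j v k i
      = Rvec (extW (fun s : (Wfin j v (i - 1)) => ξ ω ((s : ESite) : ℤ × ℤ))) j v k i := by
    intro ω
    funext n
    unfold Rvec
    refine rUp_local (hξval ω)
      (extW_PM _ (fun s => hξval ω _)) (i₀ := i) hjv ?_ (j - i).toNat i
      (by omega) (le_refl _) (n : ℕ)
    intro c' h hcc' hc'j hb1 hb2 hpar
    have hmemf : ((c', h) : ℤ × ℤ) ∈ ((Finset.Icc ((i - 1) + 1) (j - 1)) ×ˢ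
        (Finset.Icc (v - (j - (i - 1))) (v + 2 + (j - (i - 1))))).filter
          (fun z => (z.1 + z.2) % 2 = 0) := by
      rw [Finset.mem_filter, Finset.mem_product, Finset.mem_Icc, Finset.mem_Icc]
      exact ⟨⟨⟨by omega, by omega⟩, ⟨by omega, by omega⟩⟩, hpar⟩
    have hex : ∃ s : (Wfin j v (i - 1)), ((s : ESite) : ℤ × ℤ) = (c', h) := by
      refine ⟨⟨⟨(c', h), Int.even_iff.mpr hpar⟩, ?_⟩, rfl⟩
      unfold Wfin
      rw [Finset.mem_subtype]
      exact hmemf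
    exact (extW_spec _ hex (ξ ω) (fun s => rfl)).symm
  have h2 : (fun ω => Rvec (ξ ω) j v k i)
      = (fun tt : (Wfin j v (i - 1)) → ℤ => Rvec (extW tt) j v k i)
        ∘ (fun ω => fun s : (Wfin j v (i - 1)) => ξ ω ((s : ESite) : ℤ × ℤ)) := by
    funext ω; exact heq ω
  rw [h2]
  exact Measurable.of_discrete.comp (measurable_pi_lambda _ (fun s => hξmeas _))

lemma XV_measurable (w : Ω' → ℕ × ℕ → ℤ) (hwmeas : ∀ e, Measurable fun ω' => w ω' e)
    (j v : ℤ) (k : ℕ) (i : ℤ) : Measurable (fun ω' => XV (w ω') j v k i) := by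
  have heq : ∀ ω', XV (w ω') j v k i
      = XV (extG (fun s : (Gfin j (i - 1) k) => w ω' (s : ℕ × ℕ))) j v k i := by
    intro ω'
    funext n
    unfold XV
    by_cases hbr : j - ((n : ℕ) : ℤ) ≤ i
    · rw [if_pos hbr, if_pos hbr]
    · rw [if_neg hbr, if_neg hbr]
      have hloc := TSJ_local (w := w ω')
        (w' := extG (fun s : (Gfin j (i - 1) k) => w ω' (s : ℕ × ℕ)))
        (m := (j - ((n : ℕ) : ℤ) - i).toNat) (n := (n : ℕ)) ?_
      · rw [hloc]
      · intro a b hab hbn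
        have hex : ∃ s : (Gfin j (i - 1) k), (s : ℕ × ℕ) = (a, b) := by
          refine ⟨⟨(a, b), ?_⟩, rfl⟩
          unfold Gfin
          rw [Finset.mem_filter, Finset.mem_product, Finset.mem_range, Finset.mem_range]
          have hn := n.isLt
          refine ⟨⟨by omega, by omega⟩, by push_cast; omega⟩
        exact (extG_spec _ hex (w ω') (fun s => rfl)).symm
  have h2 : (fun ω' => XV (w ω') j v k i)
      = (fun tt : (Gfin j (i - 1) k) → ℤ => XV (extG tt) j v k i)
        ∘ (fun ω' => fun s : (Gfin j (i - 1) k) => w ω' (s : ℕ × ℕ)) := by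
    funext ω'; exact heq ω'
  rw [h2]
  exact Measurable.of_discrete.comp (measurable_pi_lambda _ (fun s => hwmeas _))

end FinalMeas

def f01 (x : ℤ) : ℤ := if x = 1 then 1 else 0

end SJ

open SJ in
/-- for the i.i.d. uniform `±1` sign field on `ℤ²ₑ`, the boundary
path value `r_k^+(i)` (for the target half-line `{j} × (-∞,v]`) has the same
distribution as `2·T(j-k-i, k) + v + 2k + i - j + 1`, where `T` is the last
passage time of the Seppäläinen–Johansson model with parameter `1/2`. -/
theorem rUp_eq_SJ_in_distribution {Ω Ω' : Type*} [MeasurableSpace Ω] [MeasurableSpace Ω']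
    (μ : Measure Ω) (μ' : Measure Ω') [IsProbabilityMeasure μ] [IsProbabilityMeasure μ']
    (ξ : Ω → ℤ × ℤ → ℤ)
    (hξval : ∀ ω z, ξ ω z = 1 ∨ ξ ω z = -1)
    (hξmeas : ∀ z, Measurable fun ω => ξ ω z)
    (hξindep : iIndepFun
      (fun (z : {z : ℤ × ℤ // Even (z.1 + z.2)}) (ω : Ω) => ξ ω z) μ)
    (hξunif : ∀ z : ℤ × ℤ, Even (z.1 + z.2) →
      Measure.map (fun ω => ξ ω z) μ =
        (2 : ENNReal)⁻¹ • (Measure.dirac (-1 : ℤ) + Measure.dirac (1 : ℤ)))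
    (w : Ω' → ℕ × ℕ → ℤ)
    (hwmeas : ∀ e, Measurable fun ω => w ω e)
    (hwindep : iIndepFun (fun (e : ℕ × ℕ) (ω : Ω') => w ω e) μ')
    (hwunif : ∀ e, Measure.map (fun ω => w ω e) μ' =
      (2 : ENNReal)⁻¹ • (Measure.dirac (0 : ℤ) + Measure.dirac (1 : ℤ)))
    (j v : ℤ) (hv : Even (j + v)) (k : ℕ) (i : ℤ) (hi : i ≤ j - k) :
    Measure.map (fun ω => rUp (ξ ω) j v k i) μ =
      Measure.map
        (fun ω => 2 * TSJ (w ω) (j - k - i).toNat k + v + 2 * (k : ℤ) + i - j + 1) μ' := by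
  classical
  have hjv : (j + v) % 2 = 0 := Int.even_iff.mp hv
  have hik : i ≤ j := by have : (0 : ℤ) ≤ (k : ℤ) := by positivity
                         omega
  -- replace w by its {0,1}-truncation
  set wt : Ω' → ℕ × ℕ → ℤ := fun ω' e => f01 (w ω' e) with hwt
  have hwt01 : ∀ ω' e, wt ω' e = 0 ∨ wt ω' e = 1 := by
    intro ω' e
    show f01 (w ω' e) = 0 ∨ f01 (w ω' e) = 1
    unfold f01
    split
    · right; rfl
    · left; rfl
  have hwtmeas : ∀ e, Measurable fun ω' => wt ω' e := by
    intro e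
    show Measurable fun ω' => f01 (w ω' e)
    exact (Measurable.of_discrete (f := f01)).comp (hwmeas e)
  have hwtindep : iIndepFun (fun e ω' => wt ω' e) μ' :=
    hwindep.comp (fun _ => f01) (fun _ => Measurable.of_discrete)
  have hwtunif : ∀ e, Measure.map (fun ω' => wt ω' e) μ' = nuX := by
    intro e
    have h1 : (fun ω' => wt ω' e) = f01 ∘ (fun ω' => w ω' e) := rfl
    rw [h1, ← Measure.map_map Measurable.of_discrete (hwmeas e), hwunif e]
    unfold nuX
    rw [Measure.map_smul, Measure.map_add _ _ Measurable.of_discrete,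
      Measure.map_dirac' Measurable.of_discrete, Measure.map_dirac' Measurable.of_discrete]
    norm_num [f01]
  have hξval' : ∀ ω, PM (ξ ω) := fun ω z => hξval ω z
  have hξunif' : ∀ z : ℤ × ℤ, Even (z.1 + z.2) →
      Measure.map (fun ω => ξ ω z) μ = nuR := fun z hz => hξunif z hz
  have key := key_induction μ μ' ξ hξval' hξmeas hξindep hξunif' wt hwt01 hwtmeas hwtindep
    hwtunif j v hjv k (j - i).toNat i (by omega)
  have hkfin : k < k + 1 := Nat.lt_succ_self k
  have hRmeas := Rvec_measurable ξ hξval' hξmeas j v hjv k hik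
  have hXmeas := XV_measurable wt hwtmeas j v k i
  have hproj : Measurable (fun y : Fin (k + 1) → ℤ => y ⟨k, hkfin⟩) := measurable_pi_apply _
  have step1 : Measure.map (fun ω => rUp (ξ ω) j v k i) μ
      = Measure.map (fun y : Fin (k + 1) → ℤ => y ⟨k, hkfin⟩)
          (Measure.map (fun ω => Rvec (ξ ω) j v k i) μ) := by
    rw [Measure.map_map hproj hRmeas]
    rfl
  have step2 : Measure.map (fun y : Fin (k + 1) → ℤ => y ⟨k, hkfin⟩)
      (Measure.map (fun ω' => XV (wt ω') j v k i) μ')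
      = Measure.map (fun ω' => XV (wt ω') j v k i ⟨k, hkfin⟩) μ' :=
    Measure.map_map hproj hXmeas
  have step3 : (fun ω' => XV (wt ω') j v k i ⟨k, hkfin⟩)
      = (fun ω' => 2 * TSJ (wt ω') (j - k - i).toNat k + v + 2 * (k : ℤ) + i - j + 1) := by
    funext ω'
    rw [XV_formula (by show i ≤ j - ((k : ℕ) : ℤ); push_cast; omega)]
  have step4 : Measure.map
      (fun ω' => 2 * TSJ (wt ω') (j - k - i).toNat k + v + 2 * (k : ℤ) + i - j + 1) μ'
      = Measure.map
        (fun ω' => 2 * TSJ (w ω') (j - k - i).toNat k + v + 2 * (k : ℤ) + i - j + 1) μ' := by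
    apply Measure.map_congr
    rw [Filter.EventuallyEq, ae_iff]
    apply measure_mono_null
      (t := ⋃ e : ((Finset.range ((j - k - i).toNat)) ×ˢ (Finset.range (k + 1)) : Finset (ℕ × ℕ)),
        {ω' | ¬ (w ω' (e : ℕ × ℕ) = 0 ∨ w ω' (e : ℕ × ℕ) = 1)})
    · intro ω' hω'
      simp only [Set.mem_setOf_eq] at hω'
      rw [Set.mem_iUnion]
      by_contra hgood
      push_neg at hgood
      apply hω'
      have hag : ∀ a b : ℕ, a < (j - k - i).toNat → b ≤ k → wt ω' (a, b) = w ω' (a, b) := by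
        intro a b ha hb
        have hmem : ((a, b) : ℕ × ℕ) ∈
            ((Finset.range ((j - k - i).toNat)) ×ˢ (Finset.range (k + 1)) : Finset (ℕ × ℕ)) := by
          rw [Finset.mem_product, Finset.mem_range, Finset.mem_range]
          exact ⟨ha, by omega⟩
        have hg' := hgood ⟨(a, b), hmem⟩
        simp only [Set.mem_setOf_eq, not_and_or, not_not] at hg'
        have hg : w ω' (a, b) = 0 ∨ w ω' (a, b) = 1 := hg'
        show f01 (w ω' (a, b)) = w ω' (a, b)
        unfold f01
        rcases hg with h | h <;> rw [h] <;> simp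
      rw [TSJ_local hag]
    · apply measure_iUnion_null
      intro e
      have hpre : {ω' | ¬ (w ω' (e : ℕ × ℕ) = 0 ∨ w ω' (e : ℕ × ℕ) = 1)}
          = (fun ω' => w ω' (e : ℕ × ℕ)) ⁻¹' {x : ℤ | ¬ (x = 0 ∨ x = 1)} := rfl
      rw [hpre, ← Measure.map_apply (hwmeas _) MeasurableSet.of_discrete, hwunif]
      rw [Measure.smul_apply, Measure.add_apply, Measure.dirac_apply, Measure.dirac_apply]
      rw [Set.indicator_apply, Set.indicator_apply]
      norm_num
  rw [step1, key, step2, step3, step4]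

end
end
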